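/- arXiv:2503.18196 — 9 statements merged into one kernel-verified Lean document; each statement's English description precedes it below -/
import Mathlib

section
/- If X is a compactification of the ray [0,∞) (i.e., X = closure of an embedded copy of [0,∞) in a compact metric space with remainder a continuum), then the set NC*(X) of subcontinua A of X with X \ A connected is a closed subset of C(X); in particular NC*(X) is compact. -/
open TopologicalSpace Set Metric

namespace Stmt4Aux

variable {X : Type*} [MetricSpace X] {g : ℝ → X}

/-- Bundled hypotheses on a parametrization `g : ℝ → X` of a dense ray. -/
structure RayHyp (g : ℝ → X) : Prop where
  cont : Continuous g
  injOn : Set.InjOn g (Set.Ici 0)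
  isOpen_iseg : ∀ s : ℝ, IsOpen (g '' Set.Ico 0 s)
  dense : Dense (g '' Set.Ici 0)
  ne_univ : g '' Set.Ici 0 ≠ Set.univ

namespace RayHyp

lemma seg_compact (H : RayHyp g) (s : ℝ) : IsCompact (g '' Icc 0 s) :=
  isCompact_Icc.image H.cont

lemma K_nonempty (H : RayHyp g) : ((g '' Ici 0)ᶜ).Nonempty :=
  Set.nonempty_compl.mpr H.ne_univ

lemma isOpen_R (H : RayHyp g) : IsOpen (g '' Ici 0) := by
  have : g '' Ici 0 = ⋃ n : ℕ, g '' Ico 0 n := by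
    apply Set.Subset.antisymm
    · rintro x ⟨r, hr, rfl⟩
      obtain ⟨n, hn⟩ := exists_nat_gt r
      exact Set.mem_iUnion.mpr ⟨n, ⟨r, ⟨hr, hn⟩, rfl⟩⟩
    · refine Set.iUnion_subset fun n => Set.image_mono ?_
      exact Set.Ico_subset_Icc_self.trans (Set.Icc_subset_Ici_self)
  rw [this]
  exact isOpen_iUnion fun n => H.isOpen_iseg n

/-- Complement computation: if `Q` is the relative complement of `P` in `[0,∞)`,
then `(g '' P)ᶜ = g '' Q ∪ Rᶜ`. -/
lemma compl_im (H : RayHyp g) {P Q : Set ℝ} (hP : P ⊆ Ici 0) (hQ : Q ⊆ Ici 0)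
    (hPQ : ∀ r, 0 ≤ r → (r ∈ P ↔ r ∉ Q)) :
    (g '' P)ᶜ = g '' Q ∪ (g '' Ici 0)ᶜ := by
  ext x
  simp only [Set.mem_compl_iff, Set.mem_union]
  constructor
  · intro hx
    by_cases hR : x ∈ g '' Ici 0
    · rcases hR with ⟨r, hr, rfl⟩
      left
      refine ⟨r, ?_, rfl⟩
      by_contra hq
      exact hx ⟨r, (hPQ r hr).mpr hq, rfl⟩
    · right; exact hR
  · rintro (⟨r, hq, rfl⟩ | hK)
    · rintro ⟨p, hp, hpr⟩
      have hpq : p = r := H.injOn (hP hp) (hQ hq) hpr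
      exact ((hPQ p (hP hp)).mp hp) (hpq ▸ hq)
    · intro hx
      exact hK (Set.image_mono hP hx)

lemma K_subset_closure_otail (H : RayHyp g) {s : ℝ} (hs : 0 ≤ s) :
    (g '' Ici 0)ᶜ ⊆ closure (g '' Ioi s) := by
  intro x hx
  have huniv : (Set.univ : Set X) = closure (g '' Ici 0) := H.dense.closure_eq.symm
  have hsplit : g '' Ici 0 = g '' Icc 0 s ∪ g '' Ioi s := by
    rw [← Set.image_union, Set.Icc_union_Ioi_eq_Ici hs]
  have : x ∈ closure (g '' Icc 0 s) ∪ closure (g '' Ioi s) := by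
    rw [← closure_union, ← hsplit, ← huniv]; trivial
  rcases this with h | h
  · rw [(H.seg_compact s).isClosed.closure_eq] at h
    exact absurd (Set.image_mono (Set.Icc_subset_Ici_self) h) hx
  · exact h

lemma preconn_compl_seg (H : RayHyp g) {s : ℝ} (hs : 0 ≤ s) :
    IsPreconnected (g '' Icc 0 s)ᶜ := by
  have hc : (g '' Icc 0 s)ᶜ = g '' Ioi s ∪ (g '' Ici 0)ᶜ := by
    refine H.compl_im Icc_subset_Ici_self (fun r hr => le_trans hs (le_of_lt hr))
      (fun r hr => ?_)
    simp only [Set.mem_Icc, Set.mem_Ioi, not_lt]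
    exact ⟨fun h => h.2, fun h => ⟨hr, h⟩⟩
  rw [hc]
  refine IsPreconnected.subset_closure (isPreconnected_Ioi.image g H.cont.continuousOn)
    Set.subset_union_left ?_
  exact Set.union_subset subset_closure (H.K_subset_closure_otail hs)

lemma preconn_compl_tail (H : RayHyp g) {t : ℝ} (ht : 0 ≤ t) :
    IsPreconnected (g '' Ici t ∪ (g '' Ici 0)ᶜ)ᶜ := by
  have hc : (g '' Ico 0 t)ᶜ = g '' Ici t ∪ (g '' Ici 0)ᶜ := by
    refine H.compl_im Ico_subset_Ici_self (Ici_subset_Ici.mpr ht) ?_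
    intro r hr
    simp only [Set.mem_Ico, Set.mem_Ici, not_le]
    constructor
    · rintro ⟨_, h2⟩; exact h2
    · intro h; exact ⟨hr, h⟩
  rw [← hc, compl_compl]
  exact isPreconnected_Ico.image g H.cont.continuousOn

lemma preconn_compl_subK (H : RayHyp g) {A : Set X} (hA : A ⊆ (g '' Ici 0)ᶜ) :
    IsPreconnected Aᶜ := by
  refine IsPreconnected.subset_closure
    (isPreconnected_Ici.image g H.cont.continuousOn : IsPreconnected (g '' Ici (0:ℝ))) ?_ ?_
  · intro x hx
    intro hxA
    exact hA hxA hx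
  · intro x _
    rw [H.dense.closure_eq]; trivial

lemma not_preconn_arc (H : RayHyp g) {a b : ℝ} (ha : 0 < a) (hab : a ≤ b) :
    ¬ IsPreconnected ((g '' Icc a b)ᶜ) := by
  have hc : (g '' Icc a b)ᶜ = g '' (Ico 0 a ∪ Ioi b) ∪ (g '' Ici 0)ᶜ := by
    refine H.compl_im (Icc_subset_Ici_self.trans (Ici_subset_Ici.mpr ha.le)) ?_ ?_
    · rintro r (hr | hr)
      · exact hr.1
      · exact (ha.le.trans (hab.trans hr.le) : (0:ℝ) ≤ r)
    · intro r hr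
      simp only [Set.mem_Icc, Set.mem_union, Set.mem_Ico, Set.mem_Ioi, not_or, not_and,
        not_lt]
      constructor
      · rintro ⟨h1, h2⟩
        exact ⟨fun _ => h1, h2⟩
      · rintro ⟨h1, h2⟩
        exact ⟨h1 hr, h2⟩
  intro hpre
  set U : Set X := g '' Ico 0 a with hU
  set V : Set X := (g '' Icc 0 b)ᶜ with hV
  have hUopen : IsOpen U := H.isOpen_iseg a
  have hVopen : IsOpen V := (H.seg_compact b).isClosed.isOpen_compl
  have hUsub : U ⊆ g '' Icc 0 b :=
    Set.image_mono (fun r hr => ⟨hr.1, hr.2.le.trans hab⟩)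
  have hcover : (g '' Icc a b)ᶜ ⊆ U ∪ V := by
    rw [hc]
    rintro x (⟨r, hr | hr, rfl⟩ | hK)
    · exact Or.inl ⟨r, hr, rfl⟩
    · refine Or.inr ?_
      rintro ⟨p, hp, hpr⟩
      have : p = r := H.injOn hp.1 (le_trans ha.le (hab.trans hr.le)) hpr
      subst this
      exact absurd hp.2 (not_le.mpr hr)
    · exact Or.inr (fun hx => hK (Set.image_mono Icc_subset_Ici_self hx))
  have hg0A : g 0 ∈ (g '' Icc a b)ᶜ := by
    rintro ⟨r, hr, hr0⟩
    have : r = 0 := H.injOn (ha.le.trans hr.1) Set.self_mem_Ici hr0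
    subst this
    exact absurd hr.1 (not_le.mpr ha)
  have hg0U : g 0 ∈ U := ⟨0, ⟨le_rfl, ha⟩, rfl⟩
  obtain ⟨x0, hx0⟩ := H.K_nonempty
  have hx0A : x0 ∈ (g '' Icc a b)ᶜ := fun hx =>
    hx0 (Set.image_mono (Icc_subset_Ici_self.trans (Ici_subset_Ici.mpr ha.le)) hx)
  have hx0V : x0 ∈ V := fun hx => hx0 (Set.image_mono Icc_subset_Ici_self hx)
  obtain ⟨z, hzA, hzU, hzV⟩ := hpre U V hUopen hVopen hcover ⟨g 0, hg0A, hg0U⟩ ⟨x0, hx0A, hx0V⟩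
  exact hzV (hUsub hzU)

/-- The separation of `X` at a ray point `g c`. -/
lemma cut (H : RayHyp g) {A : Set X} (hp : IsPreconnected A) {c : ℝ} (hc0 : 0 ≤ c)
    (hc : g c ∉ A) :
    A ⊆ g '' Ico 0 c ∨ A ⊆ (g '' Icc 0 c)ᶜ := by
  refine IsPreconnected.subset_or_subset (H.isOpen_iseg c)
    (H.seg_compact c).isClosed.isOpen_compl ?_ ?_ hp
  · rw [Set.disjoint_left]
    intro x hxU hxV
    exact hxV (Set.image_mono Set.Ico_subset_Icc_self hxU)
  · intro x hx
    by_cases hxseg : x ∈ g '' Icc 0 c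
    · left
      obtain ⟨r, hr, rfl⟩ := hxseg
      rcases lt_or_eq_of_le hr.2 with h | h
      · exact ⟨r, ⟨hr.1, h⟩, rfl⟩
      · exact absurd hx (h ▸ hc).elim
    · exact Or.inr hxseg

/-- Classification of subcontinua of `X`. -/
lemma classify (H : RayHyp g) {A : Set X} (hne : A.Nonempty) (hcomp : IsCompact A)
    (hp : IsPreconnected A) :
    A ⊆ (g '' Ici 0)ᶜ ∨ (∃ a b, 0 ≤ a ∧ a ≤ b ∧ A = g '' Icc a b) ∨
      (∃ t, 0 ≤ t ∧ A = g '' Ici t ∪ (g '' Ici 0)ᶜ) := by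
  set T : Set ℝ := Ici 0 ∩ g ⁻¹' A with hT
  have hTclosed : IsClosed T := isClosed_Ici.inter (hcomp.isClosed.preimage H.cont)
  have hTbdd : BddBelow T := ⟨0, fun r hr => hr.1⟩
  by_cases hK : (A ∩ (g '' Ici 0)ᶜ).Nonempty
  · -- A meets the remainder K
    rcases Set.eq_empty_or_nonempty T with hTe | hTne
    · -- A ⊆ K
      left
      intro x hxA hxR
      obtain ⟨r, hr, rfl⟩ := hxR
      have hrT : r ∈ T := ⟨hr, hxA⟩
      rw [hTe] at hrT
      exact hrT
    · right; right
      set t := sInf T with ht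
      have htT : t ∈ T := hTclosed.csInf_mem hTne hTbdd
      have ht0 : 0 ≤ t := htT.1
      have hIci : Ici t ⊆ T := by
        intro c hct
        by_contra hcT
        have hc0 : 0 ≤ c := ht0.trans hct
        have hcA : g c ∉ A := fun h => hcT ⟨hc0, h⟩
        rcases H.cut hp hc0 hcA with hsub | hsub
        · obtain ⟨x, hxA, hxK⟩ := hK
          exact hxK (Set.image_mono Set.Ico_subset_Ici_self (hsub hxA))
        · exact hsub htT.2 ⟨t, ⟨ht0, hct⟩, rfl⟩
      refine ⟨t, ht0, ?_⟩
      apply Set.Subset.antisymm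
      · intro x hxA
        by_cases hxR : x ∈ g '' Ici 0
        · obtain ⟨r, hr, rfl⟩ := hxR
          exact Or.inl ⟨r, csInf_le hTbdd ⟨hr, hxA⟩, rfl⟩
        · exact Or.inr hxR
      · refine Set.union_subset ?_ ?_
        · rintro x ⟨r, hr, rfl⟩
          exact (hIci hr).2
        · intro x hx
          have h1 : (g '' Ici 0)ᶜ ⊆ closure (g '' Ioi t) := H.K_subset_closure_otail ht0
          have h2 : g '' Ioi t ⊆ A := by
            rintro y ⟨r, hr, rfl⟩
            exact (hIci (le_of_lt hr : t ≤ r)).2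
          exact hcomp.isClosed.closure_subset ((closure_mono h2) (h1 hx))
  · -- A ⊆ R : A is an arc
    have hAR : A ⊆ g '' Ici 0 := by
      intro x hx
      by_contra h
      exact hK ⟨x, hx, h⟩
    have hTne : T.Nonempty := by
      obtain ⟨x, hx⟩ := hne
      obtain ⟨r, hr, rfl⟩ := hAR hx
      exact ⟨r, hr, hx⟩
    have hAT : A = g '' T := by
      apply Set.Subset.antisymm
      · intro x hx
        obtain ⟨r, hr, rfl⟩ := hAR hx
        exact ⟨r, ⟨hr, hx⟩, rfl⟩
      · rintro x ⟨r, hr, rfl⟩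
        exact hr.2
    -- T is bounded above
    obtain ⟨N, hN⟩ : ∃ N : ℕ, A ⊆ g '' Ico 0 N := by
      have hcover : A ⊆ ⋃ n : ℕ, g '' Ico 0 n := by
        intro x hx
        obtain ⟨r, hr, rfl⟩ := hAR hx
        obtain ⟨n, hn⟩ := exists_nat_gt r
        exact Set.mem_iUnion.mpr ⟨n, ⟨r, ⟨hr, hn⟩, rfl⟩⟩
      obtain ⟨s, hs⟩ := hcomp.elim_finite_subcover _ (fun n : ℕ => H.isOpen_iseg n) hcover
      refine ⟨s.sup id + 1, hs.trans ?_⟩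
      refine Set.iUnion₂_subset fun n hn => Set.image_mono ?_
      intro r hr
      exact ⟨hr.1, hr.2.trans_le (by exact_mod_cast Nat.le_succ_of_le (Finset.le_sup (f := id) hn))⟩
    have hTbddAbove : BddAbove T := by
      refine ⟨N, fun r hr => ?_⟩
      obtain ⟨r', hr', heq⟩ := hN hr.2
      have : r' = r := H.injOn hr'.1 hr.1 heq
      exact this ▸ hr'.2.le
    set a := sInf T with ha
    set b := sSup T with hb
    have haT : a ∈ T := hTclosed.csInf_mem hTne hTbdd
    have hbT : b ∈ T := hTclosed.csSup_mem hTne hTbddAbove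
    have hab : a ≤ b := csInf_le_csSup hTne hTbdd hTbddAbove
    have hTIcc : T = Icc a b := by
      apply Set.Subset.antisymm
      · exact fun r hr => ⟨csInf_le hTbdd hr, le_csSup hTbddAbove hr⟩
      · intro c hc
        by_contra hcT
        have hc0 : 0 ≤ c := haT.1.trans hc.1
        have hcA : g c ∉ A := fun h => hcT ⟨hc0, h⟩
        rcases H.cut hp hc0 hcA with hsub | hsub
        · obtain ⟨r', hr', heq⟩ := hsub hbT.2
          have : r' = b := H.injOn hr'.1 hbT.1 heq
          exact absurd hc.2 (not_le.mpr (this ▸ hr'.2))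
        · exact hsub haT.2 ⟨a, ⟨haT.1, hc.1⟩, rfl⟩
    exact Or.inr (Or.inl ⟨a, b, haT.1, hab, by rw [hAT, hTIcc]⟩)

theorem isClosed_main [CompactSpace X] (H : RayHyp g) :
    IsClosed {A : NonemptyCompacts X |
      IsConnected (A : Set X) ∧ IsPreconnected ((A : Set X)ᶜ)} := by
  rw [← isOpen_compl_iff, Metric.isOpen_iff]
  intro A hA
  have hfin : ∀ B : NonemptyCompacts X, EMetric.hausdorffEdist (B : Set X) (A : Set X) ≠ ⊤ :=
    fun B => hausdorffEdist_ne_top_of_nonempty_of_bounded B.nonempty A.nonempty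
      B.isCompact.isBounded A.isCompact.isBounded
  simp only [Set.mem_compl_iff, Set.mem_setOf_eq, not_and_or] at hA
  by_cases hconn : IsConnected (A : Set X)
  · -- A is connected but its complement is not preconnected
    have hnp : ¬ IsPreconnected ((A : Set X)ᶜ) := by
      rcases hA with h | h
      · exact absurd hconn h
      · exact h
    obtain ⟨a, b, ha0, hab, hAeq⟩ :
        ∃ a b, 0 < a ∧ a ≤ b ∧ (A : Set X) = g '' Icc a b := by
      rcases H.classify A.nonempty A.isCompact hconn.isPreconnected with h | ⟨a, b, ha0, hab, h⟩ | ⟨t, ht, h⟩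
      · exact absurd (H.preconn_compl_subK h) hnp
      · rcases eq_or_lt_of_le ha0 with heq | hlt
        · exact absurd (h ▸ heq ▸ H.preconn_compl_seg (heq ▸ hab)) hnp
        · exact ⟨a, b, hlt, hab, h⟩
      · exact absurd (h ▸ H.preconn_compl_tail ht) hnp
    -- the basepoint g 0 is not in A, and A is away from the remainder K
    have hp0 : g 0 ∉ (A : Set X) := by
      rw [hAeq]
      rintro ⟨r, hr, hr0⟩
      have : r = 0 := H.injOn (ha0.le.trans hr.1) Set.self_mem_Ici hr0
      exact absurd (this ▸ hr.1) (not_le.mpr ha0)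
    have hd1 : 0 < infDist (g 0) (A : Set X) :=
      (A.isCompact.isClosed.notMem_iff_infDist_pos A.nonempty).mp hp0
    have hAK : Disjoint (A : Set X) ((g '' Ici 0)ᶜ) := by
      rw [Set.disjoint_compl_right_iff_subset, hAeq]
      exact Set.image_mono (Icc_subset_Ici_self.trans (Ici_subset_Ici.mpr ha0.le))
    obtain ⟨d2, hd2, hdisj⟩ := hAK.exists_thickenings A.isCompact H.isOpen_R.isClosed_compl
    refine ⟨min (infDist (g 0) (A : Set X)) d2, lt_min hd1 hd2, ?_⟩
    intro B hB
    rw [mem_ball, NonemptyCompacts.dist_eq] at hB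
    simp only [Set.mem_compl_iff, Set.mem_setOf_eq, not_and_or]
    by_cases hBc : IsConnected (B : Set X)
    · right
      -- every point of B is close to A
      have hnear : ∀ x ∈ (B : Set X), ∃ y ∈ (A : Set X),
          dist x y < min (infDist (g 0) (A : Set X)) d2 :=
        fun x hx => exists_dist_lt_of_hausdorffDist_lt hx hB (hfin B)
      have hBK : ∀ x ∈ (B : Set X), x ∈ g '' Ici 0 := by
        intro x hx
        by_contra hxK
        obtain ⟨y, hy, hd⟩ := hnear x hx
        have hxth : x ∈ thickening d2 (A : Set X) :=
          mem_thickening_iff.mpr ⟨y, hy, hd.trans_le (min_le_right _ _)⟩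
        exact Set.disjoint_left.mp hdisj hxth (self_subset_thickening hd2 _ hxK)
      have hg0B : g 0 ∉ (B : Set X) := by
        intro h
        obtain ⟨y, hy, hd⟩ := hnear _ h
        exact absurd (infDist_le_dist_of_mem hy)
          (not_le.mpr (hd.trans_le (min_le_left _ _)))
      rcases H.classify B.nonempty B.isCompact hBc.isPreconnected with h | ⟨a', b', ha'0, ha'b', h⟩ | ⟨t, ht, h⟩
      · obtain ⟨x, hx⟩ := B.nonempty
        exact absurd (hBK x hx) (h hx)
      · rcases eq_or_lt_of_le ha'0 with heq | hlt
        · exfalso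
          apply hg0B
          rw [h, ← heq]
          exact ⟨0, ⟨le_rfl, heq ▸ ha'b'⟩, rfl⟩
        · rw [h]
          exact H.not_preconn_arc hlt ha'b'
      · exfalso
        obtain ⟨x0, hx0⟩ := H.K_nonempty
        have : x0 ∈ (B : Set X) := h ▸ Or.inr hx0
        exact hx0 (hBK x0 this)
    · left; exact hBc
  · -- A itself is not connected : split into two compact pieces
    have hnp : ¬ IsPreconnected (A : Set X) := fun h => hconn ⟨A.nonempty, h⟩
    unfold IsPreconnected at hnp
    push_neg at hnp
    obtain ⟨U, V, hUo, hVo, hcov, hAU, hAV, hUVe⟩ := hnp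
    have hmem : ∀ x, x ∈ (A : Set X) → x ∈ U → x ∈ V → False := by
      intro x h1 h2 h3
      have hx : x ∈ (A : Set X) ∩ (U ∩ V) := ⟨h1, h2, h3⟩
      rw [hUVe] at hx
      exact hx
    set C : Set X := (A : Set X) \ V with hC
    set D : Set X := (A : Set X) \ U with hD
    have hCc : IsCompact C := A.isCompact.diff hVo
    have hDc : IsCompact D := A.isCompact.diff hUo
    have hCne : C.Nonempty := by
      obtain ⟨x, hxA, hxU⟩ := hAU
      exact ⟨x, hxA, fun hxV => hmem x hxA hxU hxV⟩
    have hDne : D.Nonempty := by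
      obtain ⟨x, hxA, hxV⟩ := hAV
      exact ⟨x, hxA, fun hxU => hmem x hxA hxU hxV⟩
    have hCD : Disjoint C D := by
      rw [Set.disjoint_left]
      rintro x ⟨hxA, hxV⟩ ⟨_, hxU⟩
      rcases hcov hxA with h | h
      · exact hxU h
      · exact hxV h
    have hcup : (A : Set X) ⊆ C ∪ D := by
      intro x hxA
      by_cases hxV : x ∈ V
      · exact Or.inr ⟨hxA, fun hxU => hmem x hxA hxU hxV⟩
      · exact Or.inl ⟨hxA, hxV⟩
    obtain ⟨d, hd, hdisj⟩ := hCD.exists_thickenings hCc hDc.isClosed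
    refine ⟨d, hd, ?_⟩
    intro B hB
    rw [mem_ball, NonemptyCompacts.dist_eq] at hB
    simp only [Set.mem_compl_iff, Set.mem_setOf_eq, not_and_or]
    left
    rintro ⟨_, hBp⟩
    have hBsub : (B : Set X) ⊆ thickening d C ∪ thickening d D := by
      intro x hx
      obtain ⟨y, hy, hdist⟩ := exists_dist_lt_of_hausdorffDist_lt hx hB (hfin B)
      rcases hcup hy with h | h
      · exact Or.inl (mem_thickening_iff.mpr ⟨y, h, hdist⟩)
      · exact Or.inr (mem_thickening_iff.mpr ⟨y, h, hdist⟩)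
    have hBC : ((B : Set X) ∩ thickening d C).Nonempty := by
      obtain ⟨c, hc⟩ := hCne
      obtain ⟨x, hxB, hxc⟩ := exists_dist_lt_of_hausdorffDist_lt' hc.1 hB (hfin B)
      exact ⟨x, hxB, mem_thickening_iff.mpr ⟨c, hc, hxc⟩⟩
    have hBD : ((B : Set X) ∩ thickening d D).Nonempty := by
      obtain ⟨c, hc⟩ := hDne
      obtain ⟨x, hxB, hxc⟩ := exists_dist_lt_of_hausdorffDist_lt' hc.1 hB (hfin B)
      exact ⟨x, hxB, mem_thickening_iff.mpr ⟨c, hc, hxc⟩⟩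
    obtain ⟨z, _, hzC, hzD⟩ := hBp _ _ isOpen_thickening isOpen_thickening hBsub hBC hBD
    exact Set.disjoint_left.mp hdisj hzC hzD

end RayHyp

end Stmt4Aux

open TopologicalSpace Set

/-- The hyperspace NC*(X). -/
abbrev NCstar (X : Type*) [MetricSpace X] :=
  {A : NonemptyCompacts X // IsConnected (A : Set X) ∧ IsPreconnected ((A : Set X)ᶜ)}

/-- If the continuum X is a compactification of the ray [0,∞),
i.e. X contains a dense open homeomorphic copy R of [0,∞),
then NC*(X) is a closed subset of C(X); in particular NC*(X) is compact. -/
theorem stmt4 {X : Type*} [MetricSpace X] [CompactSpace X] [ConnectedSpace X] [Nontrivial X]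
    (R : Set X) (hRopen : IsOpen R) (hRdense : Dense R)
    (hR : Nonempty (R ≃ₜ (Set.Ici (0 : ℝ)))) :
    IsClosed {A : {A : NonemptyCompacts X // IsConnected (A : Set X)} |
        IsPreconnected ((A.1 : Set X)ᶜ)} ∧
      CompactSpace (NCstar X) := by
  obtain ⟨e⟩ := hR
  set h : ℝ → Set.Ici (0:ℝ) := fun r => ⟨max r 0, le_max_right r 0⟩ with hh
  set g : ℝ → X := fun r => (e.symm (h r) : X) with hg
  have hofnn : ∀ (r : ℝ) (hr : 0 ≤ r), h r = ⟨r, hr⟩ := fun r hr => Subtype.ext (max_eq_left hr)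
  have hcont : Continuous g :=
    continuous_subtype_val.comp (e.symm.continuous.comp
      (Continuous.subtype_mk (continuous_id.max continuous_const) _))
  have hinj : Set.InjOn g (Set.Ici 0) := by
    intro r hr r' hr' heq
    have h1 : e.symm (h r) = e.symm (h r') := Subtype.coe_injective heq
    have h2 : h r = h r' := e.symm.injective h1
    rw [hofnn r hr, hofnn r' hr'] at h2
    exact congrArg Subtype.val h2
  have hiseg : ∀ s : ℝ, IsOpen (g '' Set.Ico 0 s) := by
    intro s
    have heq2 : g '' Set.Ico 0 s =
        Subtype.val '' (e.symm '' (Subtype.val ⁻¹' (Set.Iio s) : Set (Set.Ici (0:ℝ)))) := by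
      apply Set.Subset.antisymm
      · rintro x ⟨r, ⟨hr0, hrs⟩, rfl⟩
        exact ⟨e.symm (h r), ⟨h r, by rw [hofnn r hr0]; exact hrs, rfl⟩, rfl⟩
      · rintro x ⟨y, ⟨t, ht, rfl⟩, rfl⟩
        refine ⟨(t : ℝ), ⟨t.2, ht⟩, ?_⟩
        show (e.symm (h ((t : ℝ))) : X) = (e.symm t : X)
        rw [show h ((t : ℝ)) = t from Subtype.ext (max_eq_left t.2)]
    rw [heq2]
    exact hRopen.isOpenEmbedding_subtypeVal.isOpenMap _
      (e.symm.isOpenMap _ (continuous_subtype_val.isOpen_preimage _ isOpen_Iio))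
  have hgR : g '' Set.Ici 0 = R := by
    apply Set.Subset.antisymm
    · rintro x ⟨r, _, rfl⟩
      exact (e.symm (h r)).2
    · intro x hx
      refine ⟨(e ⟨x, hx⟩ : ℝ), (e ⟨x, hx⟩).2, ?_⟩
      have h1 : h ((e ⟨x, hx⟩ : ℝ)) = e ⟨x, hx⟩ := Subtype.ext (max_eq_left (e ⟨x, hx⟩).2)
      show (e.symm (h ((e ⟨x, hx⟩ : ℝ))) : X) = x
      rw [h1, Homeomorph.symm_apply_apply]
  have hne : g '' Set.Ici 0 ≠ Set.univ := by
    rw [hgR]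
    intro hR_univ
    have hRc : IsCompact R := hR_univ ▸ isCompact_univ
    have : CompactSpace R := isCompact_iff_compactSpace.mp hRc
    have : CompactSpace (Set.Ici (0:ℝ)) := e.compactSpace
    have hIc : IsCompact (Set.Ici (0:ℝ)) := isCompact_iff_compactSpace.mpr this
    obtain ⟨M, hM⟩ := hIc.bddAbove
    have h1 : max M 0 + 1 ∈ Set.Ici (0:ℝ) :=
      le_trans (le_max_right M 0) (le_add_of_nonneg_right zero_le_one)
    have h2 := hM h1
    have h3 : M ≤ max M 0 := le_max_left M 0
    linarith
  have H : Stmt4Aux.RayHyp g :=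
    ⟨hcont, hinj, hiseg, hgR ▸ hRdense, hne⟩
  have hclosed := H.isClosed_main
  constructor
  · have hset : {A : {A : NonemptyCompacts X // IsConnected (A : Set X)} |
        IsPreconnected ((A.1 : Set X)ᶜ)} =
        Subtype.val ⁻¹' {A : NonemptyCompacts X |
          IsConnected (A : Set X) ∧ IsPreconnected ((A : Set X)ᶜ)} := by
      ext A
      simp only [Set.mem_setOf_eq, Set.mem_preimage]
      exact ⟨fun hp => ⟨A.2, hp⟩, fun hp => hp.2⟩
    rw [hset]
    exact hclosed.preimage continuous_subtype_val
  · exact isCompact_iff_compactSpace.mp hclosed.isCompact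
end

section
/- If X is an indecomposable continuum, then NC*(X) = C(X), i.e., for every nonempty closed connected subset A of X, the complement X \ A is connected. -/
open Set

lemma aux_union_preconnected {X : Type*} [TopologicalSpace X] [PreconnectedSpace X]
    {A U : Set X} (hA : IsPreconnected A) (hAne : A.Nonempty) (hU : IsOpen U)
    (hcl : IsClosed (A ∪ U)) : IsPreconnected (A ∪ U) := by
  have key : ∀ p q : Set X, IsOpen p → IsOpen q → A ∪ U ⊆ p ∪ q →
      (A ∪ U) ∩ (p ∩ q) = ∅ → A ⊆ p → ¬((A ∪ U) ∩ q).Nonempty := by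
    intro p q hp hq hcov hemp hAp hqne
    have hSq : (A ∪ U) ∩ q = U ∩ q := by
      ext x
      constructor
      · rintro ⟨hx | hx, hxq⟩
        · have : x ∈ (A ∪ U) ∩ (p ∩ q) := ⟨Or.inl hx, hAp hx, hxq⟩
          simp [hemp] at this
        · exact ⟨hx, hxq⟩
      · rintro ⟨hx, hxq⟩; exact ⟨Or.inr hx, hxq⟩
    have hSopen : IsOpen ((A ∪ U) ∩ q) := hSq ▸ hU.inter hq
    have hSclosed : IsClosed ((A ∪ U) ∩ q) := by
      have heq : (A ∪ U) ∩ q = (A ∪ U) ∩ pᶜ := by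
        ext x
        constructor
        · rintro ⟨hx, hxq⟩
          refine ⟨hx, fun hxp => ?_⟩
          have : x ∈ (A ∪ U) ∩ (p ∩ q) := ⟨hx, hxp, hxq⟩
          simp [hemp] at this
        · rintro ⟨hx, hxp⟩
          rcases hcov hx with h | h
          · exact absurd h hxp
          · exact ⟨hx, h⟩
      rw [heq]; exact hcl.inter (isClosed_compl_iff.mpr hp)
    rcases isClopen_iff.mp ⟨hSclosed, hSopen⟩ with h | h
    · rw [h] at hqne; exact hqne.ne_empty rfl
    · obtain ⟨a, ha⟩ := hAne
      have haS : a ∈ (A ∪ U) ∩ q := h ▸ mem_univ a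
      have : a ∈ (A ∪ U) ∩ (p ∩ q) := ⟨haS.1, hAp ha, haS.2⟩
      simp [hemp] at this
  intro p q hp hq hcov hpne hqne
  by_contra hne
  rw [Set.not_nonempty_iff_eq_empty] at hne
  have hsub : A ⊆ p ∨ A ⊆ q := by
    by_contra hc
    push_neg at hc
    obtain ⟨a, haA, hap⟩ := not_subset.mp hc.1
    obtain ⟨b, hbA, hbq⟩ := not_subset.mp hc.2
    have hap' : a ∈ q := (hcov (Or.inl haA)).resolve_left hap
    have hbp' : b ∈ p := (hcov (Or.inl hbA)).resolve_right hbq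
    obtain ⟨x, hx⟩ := hA p q hp hq (fun x hx => hcov (Or.inl hx)) ⟨b, hbA, hbp'⟩ ⟨a, haA, hap'⟩
    have : x ∈ (A ∪ U) ∩ (p ∩ q) := ⟨Or.inl hx.1, hx.2⟩
    simp [hne] at this
  rcases hsub with h | h
  · exact key p q hp hq hcov hne h hqne
  · exact key q p hq hp (by rwa [union_comm q p]) (by rwa [inter_comm q p]) h hpne

/-- If X is an indecomposable continuum, then NC*(X) = C(X): the complement
of every subcontinuum is connected. -/
theorem stmt5 {X : Type*} [MetricSpace X] [CompactSpace X] [ConnectedSpace X] [Nontrivial X]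
    (hind : ¬ ∃ A B : Set X, IsClosed A ∧ IsConnected A ∧ IsClosed B ∧ IsConnected B ∧
      A ≠ Set.univ ∧ B ≠ Set.univ ∧ A ∪ B = Set.univ) :
    ∀ A : Set X, A.Nonempty → IsClosed A → IsPreconnected A → IsPreconnected Aᶜ := by
  intro A hAne hAcl hAcon
  by_contra hnc
  unfold IsPreconnected at hnc
  push_neg at hnc
  obtain ⟨u, v, hu, hv, hcov, hune, hvne, htriv⟩ := hnc
  set U : Set X := Aᶜ ∩ u with hUdef
  set V : Set X := Aᶜ ∩ v with hVdef
  have hUV : U ∩ V = ∅ := by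
    apply Set.eq_empty_of_subset_empty
    rw [← htriv]
    rintro x ⟨⟨hxA, hxu⟩, ⟨_, hxv⟩⟩
    exact ⟨hxA, hxu, hxv⟩
  have hUVcov : U ∪ V = Aᶜ := by
    apply Set.Subset.antisymm
    · rintro x (⟨hx, _⟩ | ⟨hx, _⟩) <;> exact hx
    · intro x hx
      rcases hcov hx with h | h
      · exact Or.inl ⟨hx, h⟩
      · exact Or.inr ⟨hx, h⟩
  have hPeq : A ∪ U = Vᶜ := by
    ext x
    constructor
    · rintro (hx | hx)
      · exact fun hxV => hxV.1 hx
      · intro hxV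
        have : x ∈ U ∩ V := ⟨hx, hxV⟩
        simp [hUV] at this
    · intro hxV
      by_cases hxA : x ∈ A
      · exact Or.inl hxA
      · have : x ∈ U ∪ V := hUVcov ▸ hxA
        rcases this with h | h
        · exact Or.inr h
        · exact absurd h hxV
  have hQeq : A ∪ V = Uᶜ := by
    ext x
    constructor
    · rintro (hx | hx)
      · exact fun hxU => hxU.1 hx
      · intro hxU
        have : x ∈ U ∩ V := ⟨hxU, hx⟩
        simp [hUV] at this
    · intro hxU
      by_cases hxA : x ∈ A
      · exact Or.inl hxA
      · have : x ∈ U ∪ V := hUVcov ▸ hxA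
        rcases this with h | h
        · exact absurd h hxU
        · exact Or.inr h
  have hPcl : IsClosed (A ∪ U) := by
    rw [hPeq]; exact isClosed_compl_iff.mpr ((hAcl.isOpen_compl).inter hv)
  have hQcl : IsClosed (A ∪ V) := by
    rw [hQeq]; exact isClosed_compl_iff.mpr ((hAcl.isOpen_compl).inter hu)
  have hUopen : IsOpen U := (hAcl.isOpen_compl).inter hu
  have hVopen : IsOpen V := (hAcl.isOpen_compl).inter hv
  have hPcon : IsConnected (A ∪ U) :=
    ⟨hAne.mono subset_union_left, aux_union_preconnected hAcon hAne hUopen hPcl⟩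
  have hQcon : IsConnected (A ∪ V) :=
    ⟨hAne.mono subset_union_left, aux_union_preconnected hAcon hAne hVopen hQcl⟩
  have hPne : A ∪ U ≠ univ := by
    rw [hPeq]
    obtain ⟨x, hx⟩ := hvne
    exact (Set.ne_univ_iff_exists_notMem _).mpr ⟨x, fun h => h hx⟩
  have hQne : A ∪ V ≠ univ := by
    rw [hQeq]
    obtain ⟨x, hx⟩ := hune
    exact (Set.ne_univ_iff_exists_notMem _).mpr ⟨x, fun h => h hx⟩
  have hcover : (A ∪ U) ∪ (A ∪ V) = univ := by
    rw [union_union_union_comm, union_self, hUVcov, union_compl_self]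
  exact hind ⟨A ∪ U, A ∪ V, hPcl, hPcon, hQcl, hQcon, hPne, hQne, hcover⟩
end

section
/- Let X be a continuum and suppose there exists a point p ∈ X such that X \ {p} has at least three connected components. Then the hyperspace NC*(X) is not connected. -/
open TopologicalSpace Set

open Metric

/-- Every metric continuum has a non-cut point different from any prescribed point `p`. -/
theorem exists_noncut {X : Type*} [MetricSpace X] [CompactSpace X] [ConnectedSpace X]
    [Nontrivial X] (p : X) : ∃ q, q ≠ p ∧ IsPreconnected ({q}ᶜ : Set X) := by
  by_contra hcon
  push_neg at hcon
  -- for each q ≠ p choose a separation of {q}ᶜ, with p in the V part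
  have H : ∀ q : {q : X // q ≠ p}, ∃ U V : Set X,
      IsOpen U ∧ IsOpen V ∧ ({(q : X)}ᶜ : Set X) ⊆ U ∪ V ∧
      U.Nonempty ∧ V.Nonempty ∧ U ∩ V = ∅ ∧
      U ⊆ ({(q : X)}ᶜ : Set X) ∧ V ⊆ ({(q : X)}ᶜ : Set X) ∧ p ∈ V := by
    rintro ⟨q, hq⟩
    have h := hcon q hq
    unfold IsPreconnected at h
    push_neg at h
    obtain ⟨u, v, hu, hv, hcov, hne1, hne2, hiv⟩ := h
    have hs : IsOpen ({q}ᶜ : Set X) := isOpen_compl_singleton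
    have hpq : p ∈ ({q}ᶜ : Set X) := mem_compl_singleton_iff.mpr (Ne.symm hq)
    have hempuv : ({q}ᶜ ∩ u) ∩ ({q}ᶜ ∩ v) = ∅ := by
      apply eq_empty_iff_forall_notMem.mpr
      rintro x ⟨⟨hxq, hxu⟩, -, hxv⟩
      have hx : x ∈ ({q}ᶜ : Set X) ∩ (u ∩ v) := ⟨hxq, hxu, hxv⟩
      rw [hiv] at hx; exact hx
    have hempvu : ({q}ᶜ ∩ v) ∩ ({q}ᶜ ∩ u) = ∅ := by
      rw [inter_comm]; exact hempuv
    rcases hcov hpq with hpu | hpv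
    · refine ⟨{q}ᶜ ∩ v, {q}ᶜ ∩ u, hs.inter hv, hs.inter hu, ?_, hne2, hne1, hempvu,
        inter_subset_left, inter_subset_left, ⟨hpq, hpu⟩⟩
      intro x hx
      rcases hcov hx with h' | h'
      · exact Or.inr ⟨hx, h'⟩
      · exact Or.inl ⟨hx, h'⟩
    · refine ⟨{q}ᶜ ∩ u, {q}ᶜ ∩ v, hs.inter hu, hs.inter hv, ?_, hne1, hne2, hempuv,
        inter_subset_left, inter_subset_left, ⟨hpq, hpv⟩⟩
      intro x hx
      rcases hcov hx with h' | h'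
      · exact Or.inl ⟨hx, h'⟩
      · exact Or.inr ⟨hx, h'⟩
  choose U V hUo hVo hcov hUne hVne hdisj hUs hVs hpV using H
  -- the closure of U q adds at most the point q
  have hclo : ∀ q : {q : X // q ≠ p}, closure (U q) ⊆ U q ∪ {(q : X)} := by
    intro q x hx
    have hxv : x ∉ V q := by
      intro hxv
      obtain ⟨y, hyV, hyU⟩ := mem_closure_iff.1 hx (V q) (hVo q) hxv
      have : y ∈ U q ∩ V q := ⟨hyU, hyV⟩
      rw [hdisj q] at this; exact this
    by_cases hxq : x = (q : X)
    · exact Or.inr hxq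
    · rcases hcov q (mem_compl_singleton_iff.mpr hxq) with h' | h'
      · exact Or.inl h'
      · exact absurd h' hxv
  -- V q ∪ {q} is preconnected
  have hwedge : ∀ q : {q : X // q ≠ p}, IsPreconnected (V q ∪ {(q : X)}) := by
    intro q
    have hTeq : V q ∪ {(q : X)} = (U q)ᶜ := by
      ext x
      constructor
      · rintro (hx | hx) hxU
        · have : x ∈ U q ∩ V q := ⟨hxU, hx⟩
          rw [hdisj q] at this; exact this
        · exact (hUs q hxU) hx
      · intro hx
        by_cases hxq : x = (q : X)
        · exact Or.inr hxq
        · rcases hcov q (mem_compl_singleton_iff.mpr hxq) with h' | h'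
          · exact absurd h' hx
          · exact Or.inl h'
    have hTclosed : IsClosed (V q ∪ {(q : X)}) := by
      rw [hTeq]; exact (hUo q).isClosed_compl
    intro o₁ o₂ ho₁ ho₂ hcov' hne₁ hne₂
    by_contra hcon2
    rw [not_nonempty_iff_eq_empty] at hcon2
    have key : ∀ oa ob : Set X, IsOpen oa → IsOpen ob →
        V q ∪ {(q : X)} ⊆ oa ∪ ob → ((V q ∪ {(q : X)}) ∩ ob).Nonempty →
        (V q ∪ {(q : X)}) ∩ (oa ∩ ob) = ∅ → (q : X) ∈ oa → False := by
      intro oa ob hoa hob hcovab hneb hemp hqa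
      have hqT : (q : X) ∈ V q ∪ {(q : X)} := Or.inr rfl
      have hqnb : (q : X) ∉ ob := by
        intro hqb
        have : (q : X) ∈ (V q ∪ {(q : X)}) ∩ (oa ∩ ob) := ⟨hqT, hqa, hqb⟩
        rw [hemp] at this; exact this
      have hFopen : IsOpen ((V q ∪ {(q : X)}) ∩ ob) := by
        have heq : (V q ∪ {(q : X)}) ∩ ob = V q ∩ ob := by
          ext x
          constructor
          · rintro ⟨hx | hx, hxb⟩
            · exact ⟨hx, hxb⟩
            · exact absurd (hx ▸ hxb) hqnb
          · rintro ⟨hx, hxb⟩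
            exact ⟨Or.inl hx, hxb⟩
        rw [heq]; exact (hVo q).inter hob
      have hFclosed : IsClosed ((V q ∪ {(q : X)}) ∩ ob) := by
        have heq : (V q ∪ {(q : X)}) ∩ ob = (V q ∪ {(q : X)}) ∩ oaᶜ := by
          ext x
          constructor
          · rintro ⟨hxT, hxb⟩
            refine ⟨hxT, fun hxa => ?_⟩
            have : x ∈ (V q ∪ {(q : X)}) ∩ (oa ∩ ob) := ⟨hxT, hxa, hxb⟩
            rw [hemp] at this; exact this
          · rintro ⟨hxT, hxa⟩
            rcases hcovab hxT with h' | h'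
            · exact absurd h' hxa
            · exact ⟨hxT, h'⟩
        rw [heq]
        exact hTclosed.inter (isClosed_compl_iff.mpr hoa)
      rcases isClopen_iff.mp ⟨hFclosed, hFopen⟩ with h0 | huniv
      · rw [h0] at hneb
        exact hneb.ne_empty rfl
      · obtain ⟨x, hx⟩ := hUne q
        have hxT : x ∈ (V q ∪ {(q : X)}) ∩ ob := huniv ▸ mem_univ x
        rcases hxT.1 with h' | h'
        · have : x ∈ U q ∩ V q := ⟨hx, h'⟩
          rw [hdisj q] at this; exact this
        · exact (hUs q hx) h'
    have hqT : (q : X) ∈ V q ∪ {(q : X)} := Or.inr rfl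
    rcases hcov' hqT with hq1 | hq2
    · exact absurd (key o₁ o₂ ho₁ ho₂ hcov' hne₂ hcon2 hq1) not_false
    · refine absurd (key o₂ o₁ ho₂ ho₁ ?_ hne₁ ?_ hq2) not_false
      · rwa [union_comm o₂ o₁]
      · rw [inter_comm o₂ o₁]; exact hcon2
  -- Lemma B : shrinking of the U-sides
  have lemB : ∀ q y : {q : X // q ≠ p}, (y : X) ∈ U q → U y ⊆ U q \ {(y : X)} := by
    intro q y hyU
    have hTsub : V q ∪ {(q : X)} ⊆ U y ∪ V y := by
      intro x hx
      have hxy : x ≠ (y : X) := by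
        rintro rfl
        rcases hx with h' | h'
        · have : (y : X) ∈ U q ∩ V q := ⟨hyU, h'⟩
          rw [hdisj q] at this; exact this
        · exact (hUs q hyU) h'
      exact hcov y (mem_compl_singleton_iff.mpr hxy)
    have hdisjy : Disjoint (U y) (V y) := disjoint_iff_inter_eq_empty.mpr (hdisj y)
    rcases (hwedge q).subset_or_subset (hUo y) (hVo y) hdisjy hTsub with hsub | hsub
    · exfalso
      have : p ∈ U y ∩ V y := ⟨hsub (Or.inl (hpV q)), hpV y⟩
      rw [hdisj y] at this; exact this
    · intro x hxU
      have hxT : x ∉ V q ∪ {(q : X)} := by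
        intro h'
        have : x ∈ U y ∩ V y := ⟨hxU, hsub h'⟩
        rw [hdisj y] at this; exact this
      constructor
      · have hxq : x ≠ (q : X) := fun h' => hxT (Or.inr h')
        rcases hcov q (mem_compl_singleton_iff.mpr hxq) with h' | h'
        · exact h'
        · exact absurd (Or.inl h') hxT
      · exact fun h' => (hUs y hxU) h'
  -- Zorn's lemma applied to the family of U-sides
  obtain ⟨q₀, hq₀⟩ := exists_ne p
  set S : Set (Set X) := Set.range (fun q : {q : X // q ≠ p} => U q) with hS
  have hnotp : ∀ q : {q : X // q ≠ p}, p ∉ U q := by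
    intro q hp
    have : p ∈ U q ∩ V q := ⟨hp, hpV q⟩
    rw [hdisj q] at this; exact this
  have hzorn : ∀ c ⊆ S, IsChain (· ⊆ ·) c → ∃ lb ∈ S, ∀ s ∈ c, lb ⊆ s := by
    intro c hcS hchain
    rcases c.eq_empty_or_nonempty with rfl | hcne
    · exact ⟨U ⟨q₀, hq₀⟩, mem_range_self _, fun s hs => absurd hs (notMem_empty s)⟩
    haveI hne : Nonempty c := hcne.to_subtype
    have hq : ∀ w : c, ∃ q : {q : X // q ≠ p}, U q = (w : Set X) := fun w => hcS w.2
    choose qc hqc using hq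
    obtain ⟨z, hz⟩ := IsCompact.nonempty_iInter_of_directed_nonempty_isCompact_isClosed
      (fun w : c => closure (w : Set X))
      (fun w₁ w₂ => by
        rcases hchain.total w₁.2 w₂.2 with h' | h'
        · exact ⟨w₁, Set.Subset.rfl, closure_mono h'⟩
        · exact ⟨w₂, closure_mono h', Set.Subset.rfl⟩)
      (fun w => by
        show (closure (w : Set X)).Nonempty
        rw [← hqc w]; exact (hUne (qc w)).mono subset_closure)
      (fun w => isClosed_closure.isCompact)
      (fun w => isClosed_closure)
    have hz' : ∀ w : c, z ∈ U (qc w) ∪ {((qc w) : X)} := by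
      intro w
      have hzw : z ∈ closure (w : Set X) := mem_iInter.mp hz w
      rw [← hqc w] at hzw
      exact hclo (qc w) hzw
    have hzp : z ≠ p := by
      obtain ⟨w⟩ := hne
      rintro rfl
      rcases hz' w with h' | h'
      · exact hnotp (qc w) h'
      · exact (qc w).2 h'.symm
    refine ⟨U ⟨z, hzp⟩, mem_range_self _, ?_⟩
    intro s hs
    rcases hz' ⟨s, hs⟩ with h' | h'
    · have := (lemB (qc ⟨s, hs⟩) ⟨z, hzp⟩ h').trans diff_subset
      rwa [hqc ⟨s, hs⟩] at this
    · have hzeq : (⟨z, hzp⟩ : {q : X // q ≠ p}) = qc ⟨s, hs⟩ := Subtype.ext h'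
      rw [hzeq, hqc ⟨s, hs⟩]
  obtain ⟨m, hm⟩ := zorn_superset S hzorn
  obtain ⟨qm, hqm0⟩ := hm.1
  have hqm : U qm = m := hqm0
  obtain ⟨y, hy⟩ := hUne qm
  have hym : y ∈ m := hqm ▸ hy
  have hyp : y ≠ p := by
    rintro rfl
    exact hnotp qm hy
  have hUy : U ⟨y, hyp⟩ ⊆ m := by
    have := (lemB qm ⟨y, hyp⟩ hy).trans diff_subset
    rwa [hqm] at this
  have hmin := hm.2 (mem_range_self (⟨y, hyp⟩ : {q : X // q ≠ p})) hUy
  exact (hUs ⟨y, hyp⟩ (hmin hym)) rfl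

/-- If X is a continuum and X \ {p} has at least three connected components
(witnessed by three points in pairwise distinct components), then NC*(X) is not connected. -/
theorem stmt6 {X : Type*} [MetricSpace X] [CompactSpace X] [ConnectedSpace X] [Nontrivial X]
    (p a b c : X) (ha : a ≠ p) (hb : b ≠ p) (hc : c ≠ p)
    (hab : connectedComponentIn ({p}ᶜ) a ≠ connectedComponentIn ({p}ᶜ) b)
    (hac : connectedComponentIn ({p}ᶜ) a ≠ connectedComponentIn ({p}ᶜ) c)
    (hbc : connectedComponentIn ({p}ᶜ) b ≠ connectedComponentIn ({p}ᶜ) c) :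
    ¬ ConnectedSpace (NCstar X) := by
  intro hCS
  set Y : Set X := {p}ᶜ with hYdef
  have haY : a ∈ Y := mem_compl_singleton_iff.mpr ha
  have hbY : b ∈ Y := mem_compl_singleton_iff.mpr hb
  have hcY : c ∈ Y := mem_compl_singleton_iff.mpr hc
  -- the whole space as an element of NC*(X)
  have hXc : IsConnected ((⟨⟨univ, isCompact_univ⟩, univ_nonempty⟩ : NonemptyCompacts X) : Set X) :=
    ⟨univ_nonempty, isPreconnected_univ⟩
  have hXcc : IsPreconnected (((⟨⟨univ, isCompact_univ⟩, univ_nonempty⟩ :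
      NonemptyCompacts X) : Set X)ᶜ) := by
    show IsPreconnected ((univ : Set X)ᶜ)
    rw [compl_univ]
    exact isPreconnected_empty
  let 𝒳 : NCstar X := ⟨⟨⟨univ, isCompact_univ⟩, univ_nonempty⟩, hXc, hXcc⟩
  -- a singleton non-cut point as an element of NC*(X)
  obtain ⟨q, hqp, hqpre⟩ := exists_noncut p
  let 𝒬 : NCstar X := ⟨⟨⟨{q}, isCompact_singleton⟩, singleton_nonempty q⟩,
    isConnected_singleton, hqpre⟩
  -- the separation of NC*(X)
  set 𝒰 : Set (NCstar X) := {A | p ∈ (A.1 : Set X)} with h𝒰def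
  set 𝒱 : Set (NCstar X) := {A | p ∉ (A.1 : Set X)} with h𝒱def
  -- 𝒱 is open
  have h𝒱open : IsOpen 𝒱 := by
    rw [Metric.isOpen_iff]
    intro A hA
    have hAne : (A.1 : Set X).Nonempty := A.1.nonempty
    have hAcl : IsClosed (A.1 : Set X) := A.1.isCompact.isClosed
    have hpos : 0 < infDist p (A.1 : Set X) := (hAcl.notMem_iff_infDist_pos hAne).mp hA
    refine ⟨_, hpos, ?_⟩
    intro B hB
    rw [mem_ball] at hB
    by_contra hpB
    rw [h𝒱def, mem_setOf_eq, not_not] at hpB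
    have hfin : EMetric.hausdorffEdist (B.1 : Set X) (A.1 : Set X) ≠ ⊤ :=
      hausdorffEdist_ne_top_of_nonempty_of_bounded B.1.nonempty hAne
        B.1.isCompact.isBounded A.1.isCompact.isBounded
    have hle : infDist p (A.1 : Set X) ≤ hausdorffDist (B.1 : Set X) (A.1 : Set X) :=
      infDist_le_hausdorffDist_of_mem hpB hfin
    have hdd : dist B A = hausdorffDist (B.1 : Set X) (A.1 : Set X) := by
      rw [Subtype.dist_eq, NonemptyCompacts.dist_eq]
    rw [hdd] at hB
    linarith
  -- 𝒰 is open: the hard part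
  have h𝒰open : IsOpen 𝒰 := by
    rw [Metric.isOpen_iff]
    intro A hpA
    rw [h𝒰def, mem_setOf_eq] at hpA
    by_contra hno
    push_neg at hno
    -- pick two of the three components that are disjoint from (A.1)ᶜ, with a safety radius
    obtain ⟨u, v, huY, hvY, huv, huA, hvA, ρ, hρ, hSAFE⟩ :
        ∃ u v : X, u ∈ Y ∧ v ∈ Y ∧
          connectedComponentIn Y u ≠ connectedComponentIn Y v ∧
          connectedComponentIn Y u ⊆ (A.1 : Set X) ∧
          connectedComponentIn Y v ⊆ (A.1 : Set X) ∧
          ∃ ρ : ℝ, 0 < ρ ∧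
            ∀ B : Set X, B ⊆ Y → IsPreconnected B →
              (∃ y ∈ B, dist u y < ρ) → B ⊆ (A.1 : Set X) := by
      rcases eq_empty_or_nonempty ((A.1 : Set X)ᶜ) with hAc | ⟨z₀, hz₀⟩
      · have hAu : (A.1 : Set X) = univ := by rwa [compl_empty_iff] at hAc
        exact ⟨a, b, haY, hbY, hab, by rw [hAu]; exact subset_univ _,
          by rw [hAu]; exact subset_univ _, 1, one_pos,
          fun B _ _ _ => by rw [hAu]; exact subset_univ _⟩
      · have hz₀Y : z₀ ∈ Y :=
          mem_compl_singleton_iff.mpr (fun hzp => hz₀ (hzp ▸ hpA))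
        set C := connectedComponentIn Y z₀ with hCdef
        have hAC : ((A.1 : Set X))ᶜ ⊆ C := by
          apply IsPreconnected.subset_connectedComponentIn A.2.2 hz₀
          intro x hx
          exact mem_compl_singleton_iff.mpr (fun hxp => hx (hxp ▸ hpA))
        have hz₀C : z₀ ∈ C := mem_connectedComponentIn hz₀Y
        have hclC : closure C ⊆ C ∪ {p} := by
          intro x hx
          by_cases hxp : x = p
          · exact Or.inr hxp
          · left
            have hxY : x ∈ Y := mem_compl_singleton_iff.mpr hxp
            have hpre : IsPreconnected (closure C ∩ Y) :=
              isPreconnected_connectedComponentIn.subset_closure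
                (subset_inter subset_closure (connectedComponentIn_subset _ _))
                inter_subset_left
            have hsub : closure C ∩ Y ⊆ C :=
              hpre.subset_connectedComponentIn ⟨subset_closure hz₀C, hz₀Y⟩ inter_subset_right
            exact hsub ⟨hx, hxY⟩
        -- pick two of a, b, c whose components differ from C
        obtain ⟨u, v, huY, hvY, huv, huC, hvC⟩ :
            ∃ u v : X, u ∈ Y ∧ v ∈ Y ∧
              connectedComponentIn Y u ≠ connectedComponentIn Y v ∧
              connectedComponentIn Y u ≠ C ∧ connectedComponentIn Y v ≠ C := by
          by_cases h1 : connectedComponentIn Y a = C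
          · exact ⟨b, c, hbY, hcY, hbc, fun h' => hab (h1.trans h'.symm),
              fun h' => hac (h1.trans h'.symm)⟩
          · by_cases h2 : connectedComponentIn Y b = C
            · exact ⟨a, c, haY, hcY, hac, h1, fun h' => hbc (h2.trans h'.symm)⟩
            · exact ⟨a, b, haY, hbY, hab, h1, h2⟩
        have hcompsub : ∀ w : X, connectedComponentIn Y w ≠ C →
            connectedComponentIn Y w ⊆ (A.1 : Set X) := by
          intro w hwC x hx
          by_contra hxA
          have hxC : x ∈ C := hAC hxA
          exact hwC ((connectedComponentIn_eq hx).trans (connectedComponentIn_eq hxC).symm)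
        have hunotin : u ∉ closure C := by
          intro h'
          rcases hclC h' with h'' | h''
          · exact huC (connectedComponentIn_eq h'').symm
          · exact (mem_compl_singleton_iff.mp huY) h''
        have hclCne : (closure C).Nonempty := ⟨z₀, subset_closure hz₀C⟩
        have hρpos : 0 < infDist u (closure C) :=
          (isClosed_closure.notMem_iff_infDist_pos hclCne).mp hunotin
        refine ⟨u, v, huY, hvY, huv, hcompsub u huC, hcompsub v hvC,
          infDist u (closure C), hρpos, ?_⟩
        rintro B hBY hBpre ⟨y, hyB, hyd⟩
        rcases (B ∩ C).eq_empty_or_nonempty with hBC | ⟨z, hzB, hzC⟩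
        · intro x hxB
          by_contra hxA
          have : x ∈ B ∩ C := ⟨hxB, hAC hxA⟩
          rw [hBC] at this
          exact this
        · exfalso
          have hBsub : B ⊆ connectedComponentIn Y z := hBpre.subset_connectedComponentIn hzB hBY
          have hCz : C = connectedComponentIn Y z := connectedComponentIn_eq hzC
          have hyC : y ∈ closure C := subset_closure (hCz ▸ (hBsub hyB))
          have := infDist_le_dist_of_mem (x := u) hyC
          linarith
    -- choose a sequence of elements of NC*(X) avoiding p and converging to A
    have hball : ∀ n : ℕ, ∃ B : NCstar X,
        dist B A < min ρ (1 / ((n : ℝ) + 1)) ∧ p ∉ (B.1 : Set X) := by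
      intro n
      have hpos : (0 : ℝ) < min ρ (1 / ((n : ℝ) + 1)) := lt_min hρ (by positivity)
      obtain ⟨B, hB1, hB2⟩ := not_subset.mp (hno _ hpos)
      rw [mem_ball] at hB1
      refine ⟨B, hB1, ?_⟩
      intro hpB
      exact hB2 hpB
    choose 𝔹 hdist hp𝔹 using hball
    have hdense : ∀ n : ℕ, ∀ x ∈ (A.1 : Set X),
        ∃ y ∈ ((𝔹 n).1 : Set X), dist x y < min ρ (1 / ((n : ℝ) + 1)) := by
      intro n x hx
      have hfin : EMetric.hausdorffEdist ((A.1 : Set X)) (((𝔹 n).1 : Set X)) ≠ ⊤ :=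
        hausdorffEdist_ne_top_of_nonempty_of_bounded A.1.nonempty (𝔹 n).1.nonempty
          A.1.isCompact.isBounded (𝔹 n).1.isCompact.isBounded
      have hhd : hausdorffDist ((A.1 : Set X)) (((𝔹 n).1 : Set X)) < min ρ (1 / ((n : ℝ) + 1)) := by
        rw [hausdorffDist_comm]
        have h' := hdist n
        rwa [Subtype.dist_eq, NonemptyCompacts.dist_eq] at h'
      exact exists_dist_lt_of_hausdorffDist_lt hx hhd hfin
    have hBY : ∀ n : ℕ, ((𝔹 n).1 : Set X) ⊆ Y := fun n x hx =>
      mem_compl_singleton_iff.mpr (fun h' => hp𝔹 n (h' ▸ hx))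
    have huA' : u ∈ (A.1 : Set X) := huA (mem_connectedComponentIn huY)
    have hvA' : v ∈ (A.1 : Set X) := hvA (mem_connectedComponentIn hvY)
    have hBA : ∀ n : ℕ, ((𝔹 n).1 : Set X) ⊆ (A.1 : Set X) := by
      intro n
      apply hSAFE _ (hBY n) ((𝔹 n).2.1.isPreconnected)
      obtain ⟨y, hy, hyd⟩ := hdense n u huA'
      exact ⟨y, hy, hyd.trans_le (min_le_left _ _)⟩
    -- the connected bridge
    set W : Set X := connectedComponentIn Y u ∪ connectedComponentIn Y v ∪
      ⋃ n : ℕ, ((𝔹 n).1 : Set X) with hWdef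
    have hWY : W ⊆ Y := by
      rintro x ((h' | h') | h')
      · exact connectedComponentIn_subset _ _ h'
      · exact connectedComponentIn_subset _ _ h'
      · obtain ⟨n, hn⟩ := mem_iUnion.mp h'
        exact hBY n hn
    have hWA : W ⊆ (A.1 : Set X) := by
      rintro x ((h' | h') | h')
      · exact huA h'
      · exact hvA h'
      · obtain ⟨n, hn⟩ := mem_iUnion.mp h'
        exact hBA n hn
    have hWpre : IsPreconnected W := by
      rintro o₁ o₂ ho₁ ho₂ hcov ⟨w₁, hw₁W, hw₁⟩ ⟨w₂, hw₂W, hw₂⟩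
      obtain ⟨r₁, hr₁, hball₁⟩ := Metric.isOpen_iff.mp ho₁ w₁ hw₁
      obtain ⟨r₂, hr₂, hball₂⟩ := Metric.isOpen_iff.mp ho₂ w₂ hw₂
      obtain ⟨n, hn⟩ := exists_nat_one_div_lt (lt_min hr₁ hr₂)
      obtain ⟨y₁, hy₁B, hy₁d⟩ := hdense n w₁ (hWA hw₁W)
      obtain ⟨y₂, hy₂B, hy₂d⟩ := hdense n w₂ (hWA hw₂W)
      have hy₁ : y₁ ∈ o₁ := by
        apply hball₁
        rw [mem_ball, dist_comm]
        calc dist w₁ y₁ < min ρ (1 / ((n : ℝ) + 1)) := hy₁d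
          _ ≤ 1 / ((n : ℝ) + 1) := min_le_right _ _
          _ < min r₁ r₂ := hn
          _ ≤ r₁ := min_le_left _ _
      have hy₂ : y₂ ∈ o₂ := by
        apply hball₂
        rw [mem_ball, dist_comm]
        calc dist w₂ y₂ < min ρ (1 / ((n : ℝ) + 1)) := hy₂d
          _ ≤ 1 / ((n : ℝ) + 1) := min_le_right _ _
          _ < min r₁ r₂ := hn
          _ ≤ r₂ := min_le_right _ _
      have hBn_sub : ((𝔹 n).1 : Set X) ⊆ W := fun x hx =>
        Or.inr (mem_iUnion.mpr ⟨n, hx⟩)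
      obtain ⟨x, hx1, hx2⟩ := ((𝔹 n).2.1.isPreconnected) o₁ o₂ ho₁ ho₂
        (hBn_sub.trans hcov) ⟨y₁, hy₁B, hy₁⟩ ⟨y₂, hy₂B, hy₂⟩
      exact ⟨x, hBn_sub hx1, hx2⟩
    have huW : u ∈ W := Or.inl (Or.inl (mem_connectedComponentIn huY))
    have hvW : v ∈ W := Or.inl (Or.inr (mem_connectedComponentIn hvY))
    have hWsub : W ⊆ connectedComponentIn Y u :=
      hWpre.subset_connectedComponentIn huW hWY
    exact huv (connectedComponentIn_eq (hWsub hvW))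
  -- combine into a contradiction with connectedness
  have hpre : IsPreconnected (univ : Set (NCstar X)) := isPreconnected_univ
  have hcover : (univ : Set (NCstar X)) ⊆ 𝒰 ∪ 𝒱 := by
    intro A _
    by_cases h' : p ∈ (A.1 : Set X)
    · exact Or.inl h'
    · exact Or.inr h'
  have h1 : (univ ∩ 𝒰).Nonempty := ⟨𝒳, trivial, mem_univ p⟩
  have h2 : (univ ∩ 𝒱).Nonempty := by
    refine ⟨𝒬, trivial, ?_⟩
    intro h'
    exact hqp (mem_singleton_iff.mp h').symm
  obtain ⟨E, -, hE𝒰, hE𝒱⟩ := hpre 𝒰 𝒱 h𝒰open h𝒱open hcover h1 h2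
  exact hE𝒱 hE𝒰
end

section
/- Let G be a finite graph such that NC*(G) is connected. Then for every p ∈ G, the complement G \ {p} has at most two connected components. -/
open TopologicalSpace Set

/-- A finite graph: a space which is a finite union of arcs, any two of which meet
in a finite set. -/
def IsFiniteGraph (G : Type*) [TopologicalSpace G] : Prop :=
  ∃ 𝒜 : Finset (Set G),
    (⋃ A ∈ 𝒜, A) = Set.univ ∧
    (∀ A ∈ 𝒜, Nonempty (unitInterval ≃ₜ A)) ∧
    (∀ A ∈ 𝒜, ∀ B ∈ 𝒜, A ≠ B → (A ∩ B).Finite)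

section AuxNCstar
open Metric

private lemma arc_isCompact {G : Type*} [MetricSpace G] {A : Set G} (h : Nonempty (unitInterval ≃ₜ A)) : IsCompact A := by
  obtain ⟨e⟩ := h
  exact isCompact_iff_compactSpace.2 e.compactSpace

lemma finiteGraph_locallyConnected {G : Type*} [MetricSpace G] (hfg : IsFiniteGraph G) :
    LocallyConnectedSpace G := by
  rw [locallyConnectedSpace_iff_connected_subsets]
  intro q U hU
  obtain ⟨U', hU'sub, hU'open, hqU'⟩ := _root_.mem_nhds_iff.1 hU
  obtain ⟨𝒜, hcov, harc, -⟩ := hfg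
  classical
  have key : ∀ A ∈ 𝒜, q ∈ A →
      ∃ W : Set G, q ∈ W ∧ IsPreconnected W ∧ W ⊆ U' ∧ W ∈ nhdsWithin q A ∧ W ⊆ A := by
    intro A hA hqA
    obtain ⟨e⟩ := harc A hA
    set t : unitInterval := e.symm ⟨q, hqA⟩ with ht
    set f : ℝ → G := fun s => (e (Set.projIcc 0 1 zero_le_one s) : G) with hfdef
    have hf : Continuous f := by
      exact (continuous_subtype_val.comp e.continuous).comp continuous_projIcc
    have hft : f (t : ℝ) = q := by
      simp only [hfdef, Set.projIcc_val]
      rw [ht]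
      simp
    have hmem : f ⁻¹' U' ∈ nhds (t : ℝ) := by
      have : f (t:ℝ) ∈ U' := by rw [hft]; exact hqU'
      exact hf.continuousAt.preimage_mem_nhds (hU'open.mem_nhds this)
    obtain ⟨η, hη, hball⟩ := Metric.mem_nhds_iff.1 hmem
    refine ⟨f '' Icc ((t:ℝ) - η/2) ((t:ℝ) + η/2), ?_, ?_, ?_, ?_, ?_⟩
    · exact ⟨(t:ℝ), by constructor <;> [linarith; linarith], hft⟩
    · exact isPreconnected_Icc.image f hf.continuousOn
    · rintro - ⟨s, hs, rfl⟩
      apply hball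
      simp only [Metric.mem_ball, Real.dist_eq]
      rw [abs_sub_lt_iff]
      obtain ⟨h1, h2⟩ := hs
      constructor <;> linarith
    · -- neighborhood within A
      have hIooOpen : IsOpen (Subtype.val ⁻¹' Ioo ((t:ℝ) - η/2) ((t:ℝ) + η/2) : Set unitInterval) :=
        isOpen_Ioo.preimage continuous_subtype_val
      have himgOpen : IsOpen (e '' (Subtype.val ⁻¹' Ioo ((t:ℝ) - η/2) ((t:ℝ) + η/2))) :=
        (e.isOpen_image).2 hIooOpen
      obtain ⟨O, hOopen, hOeq⟩ := isOpen_induced_iff.1 himgOpen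
      rw [mem_nhdsWithin]
      refine ⟨O, hOopen, ?_, ?_⟩
      · have : (⟨q, hqA⟩ : A) ∈ e '' (Subtype.val ⁻¹' Ioo ((t:ℝ) - η/2) ((t:ℝ) + η/2)) := by
        -- q = e t
          refine ⟨t, ?_, ?_⟩
          · simp only [mem_preimage, mem_Ioo]
            constructor <;> linarith
          · rw [ht]; exact e.apply_symm_apply _
        rw [← hOeq] at this
        exact this
      · rintro z ⟨hzO, hzA⟩
        have : (⟨z, hzA⟩ : A) ∈ Subtype.val ⁻¹' O := hzO
        rw [hOeq] at this
        obtain ⟨s, hs, hes⟩ := this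
        refine ⟨(s : ℝ), ?_, ?_⟩
        · exact ⟨le_of_lt hs.1, le_of_lt hs.2⟩
        · show (e (Set.projIcc 0 1 zero_le_one (s:ℝ)) : G) = z
          rw [Set.projIcc_val, hes]
    · rintro - ⟨s, hs, rfl⟩
      exact (e (Set.projIcc 0 1 zero_le_one s)).2
  choose! W hWq hWconn hWU hWnhd hWA using key
  have hcover' : ∀ z : G, ∃ A ∈ 𝒜, z ∈ A := by
    intro z
    have : z ∈ ⋃ A ∈ 𝒜, A := by rw [hcov]; exact mem_univ z
    simpa using this
  -- build an open set inside the union of pieces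
  have hO : ∀ A ∈ 𝒜, ∃ O : Set G, IsOpen O ∧ q ∈ O ∧ ∀ z ∈ O ∩ A, q ∈ A ∧ z ∈ W A := by
    intro A hA
    by_cases hqA : q ∈ A
    · obtain ⟨O, hOopen, hOq, hOsub⟩ := mem_nhdsWithin.1 (hWnhd A hA hqA)
      exact ⟨O, hOopen, hOq, fun z hz => ⟨hqA, hOsub hz⟩⟩
    · refine ⟨Aᶜ, ?_, hqA, ?_⟩
      · exact (arc_isCompact (harc A hA)).isClosed.isOpen_compl
      · rintro z ⟨hz1, hz2⟩; exact absurd hz2 hz1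
  choose! O hOopen hOq hOsub using hO
  set V : Set G := ⋃₀ (W '' {A | A ∈ 𝒜 ∧ q ∈ A}) with hV
  have hVU : V ⊆ U := by
    rintro z ⟨-, ⟨A, ⟨hA, hqA⟩, rfl⟩, hzW⟩
    exact hU'sub (hWU A hA hqA hzW)
  have hVconn : IsPreconnected V := by
    apply isPreconnected_sUnion q
    · rintro - ⟨A, ⟨hA, hqA⟩, rfl⟩; exact hWq A hA hqA
    · rintro - ⟨A, ⟨hA, hqA⟩, rfl⟩; exact hWconn A hA hqA
  have hVnhds : V ∈ nhds q := by
    have hΩopen : IsOpen (⋂ A ∈ 𝒜, O A) := isOpen_biInter_finset (fun A hA => hOopen A hA)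
    have hΩq : q ∈ ⋂ A ∈ 𝒜, O A := mem_biInter (fun A hA => hOq A hA)
    refine Filter.mem_of_superset (hΩopen.mem_nhds hΩq) ?_
    intro z hz
    obtain ⟨A, hA, hzA⟩ := hcover' z
    have hzO : z ∈ O A := by
      have := mem_iInter.1 hz A
      exact (mem_iInter.1 this) hA
    obtain ⟨hqA, hzW⟩ := hOsub A hA z ⟨hzO, hzA⟩
    exact ⟨W A, ⟨A, ⟨hA, hqA⟩, rfl⟩, hzW⟩
  exact ⟨V, hVnhds, hVconn, hVU⟩

lemma comp_meets_closure {G : Type*} [MetricSpace G] [CompactSpace G] [ConnectedSpace G] {N : Set G} (hN : IsOpen N) (hNne : N.Nonempty) {x : G}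
    (hx : x ∈ Nᶜ) : (connectedComponentIn Nᶜ x ∩ closure N).Nonempty := by
  by_contra hcon
  rw [not_nonempty_iff_eq_empty] at hcon
  have hFc : IsClosed (Nᶜ) := hN.isClosed_compl
  haveI : CompactSpace ↥(Nᶜ) := isCompact_iff_compactSpace.1 hFc.isCompact
  set x₀ : ↥(Nᶜ) := ⟨x, hx⟩ with hx₀
  have himg := connectedComponentIn_eq_image (F := Nᶜ) hx
  have hrepr := connectedComponent_eq_iInter_isClopen x₀
  -- the family of clopen sets containing x₀
  have hsub : (Subtype.val ⁻¹' closure N : Set ↥(Nᶜ)) ∩ ⋂ (Z : {Z : Set ↥(Nᶜ) // IsClopen Z ∧ x₀ ∈ Z}), (Z : Set ↥(Nᶜ)) = ∅ := by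
    rw [← hrepr]
    rw [eq_empty_iff_forall_notMem]
    rintro z ⟨hz1, hz2⟩
    have : (z : G) ∈ connectedComponentIn Nᶜ x ∩ closure N := by
      constructor
      · rw [himg]; exact ⟨z, hz2, rfl⟩
      · exact hz1
    rw [hcon] at this
    exact this
  haveI : Nonempty {Z : Set ↥(Nᶜ) // IsClopen Z ∧ x₀ ∈ Z} := ⟨⟨univ, isClopen_univ, mem_univ _⟩⟩
  have hscomp : IsCompact (Subtype.val ⁻¹' closure N : Set ↥(Nᶜ)) :=
    (isClosed_closure.preimage continuous_subtype_val).isCompact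
  obtain ⟨⟨E, hEclopen, hEx⟩, hE⟩ := hscomp.elim_directed_family_closed
    (fun Z : {Z : Set ↥(Nᶜ) // IsClopen Z ∧ x₀ ∈ Z} => (Z : Set ↥(Nᶜ)))
    (fun Z => Z.2.1.1) hsub
    (fun Z₁ Z₂ => ⟨⟨Z₁.1 ∩ Z₂.1, Z₁.2.1.inter Z₂.2.1, ⟨Z₁.2.2, Z₂.2.2⟩⟩,
      inter_subset_left, inter_subset_right⟩)
  -- E is clopen in the subtype, x₀ ∈ E, and val⁻¹' closure N ∩ E = ∅
  set S : Set G := Subtype.val '' E with hS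
  have hSx : x ∈ S := ⟨x₀, hEx, rfl⟩
  have hSclosedN : S ∩ closure N = ∅ := by
    rw [eq_empty_iff_forall_notMem]
    rintro z ⟨⟨z₀, hz₀, rfl⟩, hz2⟩
    have : z₀ ∈ (Subtype.val ⁻¹' closure N : Set ↥(Nᶜ)) ∩ E := ⟨hz2, hz₀⟩
    rw [hE] at this
    exact this
  have hSclosed : IsClosed S := by
    have : IsCompact E := hEclopen.1.isCompact
    exact (this.image continuous_subtype_val).isClosed
  have hSopen : IsOpen S := by
    obtain ⟨O, hOopen, hOeq⟩ := isOpen_induced_iff.1 hEclopen.2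
    have h1 : S ⊆ (closure N)ᶜ := by
      intro z hz
      intro hzc
      rw [eq_empty_iff_forall_notMem] at hSclosedN
      exact hSclosedN z ⟨hz, hzc⟩
    have h2 : S = O ∩ (closure N)ᶜ := by
      apply Subset.antisymm
      · intro z hz
        refine ⟨?_, h1 hz⟩
        obtain ⟨z₀, hz₀, rfl⟩ := hz
        rw [← hOeq] at hz₀
        exact hz₀
      · rintro z ⟨hzO, hzc⟩
        have hzN : z ∈ Nᶜ := fun hzN => hzc (subset_closure hzN)
        refine ⟨⟨z, hzN⟩, ?_, rfl⟩
        rw [← hOeq]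
        exact hzO
    rw [h2]
    exact hOopen.inter isClosed_closure.isOpen_compl
  -- S is a nonempty proper clopen subset: contradiction
  obtain ⟨n, hn⟩ := hNne
  have hnS : n ∉ S := by
    intro hnS
    rw [eq_empty_iff_forall_notMem] at hSclosedN
    exact hSclosedN n ⟨hnS, subset_closure hn⟩
  have := (IsClopen.eq_univ ⟨hSclosed, hSopen⟩ ⟨x, hSx⟩ : S = univ)
  rw [this] at hnS
  exact hnS (mem_univ n)

lemma exists_nc_avoiding {G : Type*} [MetricSpace G] [CompactSpace G] [ConnectedSpace G] [LocallyConnectedSpace G] {p a : G} (ha : a ≠ p) :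
    ∃ K : Set G, IsCompact K ∧ IsConnected K ∧ IsPreconnected Kᶜ ∧ p ∉ K := by
  have hr : 0 < dist p a := dist_pos.2 (Ne.symm ha)
  set N : Set G := connectedComponentIn (ball p (dist p a)) p with hNdef
  have hNopen : IsOpen N := isOpen_ball.connectedComponentIn
  have hpN : p ∈ N := mem_connectedComponentIn (mem_ball_self hr)
  have hNconn : IsConnected N := isConnected_connectedComponentIn_iff.2 (mem_ball_self hr)
  have haN : a ∈ Nᶜ := by
    intro haN
    have : a ∈ ball p (dist p a) := connectedComponentIn_subset _ _ haN
    rw [mem_ball, dist_comm] at this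
    exact lt_irrefl _ this
  set K : Set G := connectedComponentIn Nᶜ a with hKdef
  have hKsub : K ⊆ Nᶜ := connectedComponentIn_subset _ _
  have hKconn : IsConnected K := isConnected_connectedComponentIn_iff.2 haN
  have hpK : p ∉ K := fun hp => hKsub hp hpN
  have hKcomp : IsCompact K := by
    have hFc : IsClosed (Nᶜ) := hNopen.isClosed_compl
    haveI : CompactSpace ↥(Nᶜ) := isCompact_iff_compactSpace.1 hFc.isCompact
    rw [hKdef, connectedComponentIn_eq_image haN]
    exact (isClosed_connectedComponent.isCompact).image continuous_subtype_val
  refine ⟨K, hKcomp, hKconn, ?_, hpK⟩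
  -- Kᶜ = N ∪ (other components of Nᶜ)
  set c : Set (Set G) :=
    {S | S = N ∨ ∃ z, z ∈ Nᶜ ∧ z ∉ K ∧ S = N ∪ connectedComponentIn Nᶜ z} with hc
  have hcup : ⋃₀ c = Kᶜ := by
    apply Subset.antisymm
    · rintro w ⟨S, hS, hwS⟩
      rcases hS with rfl | ⟨z, hz1, hz2, rfl⟩
      · exact fun hwK => hKsub hwK hwS
      · rcases hwS with hwN | hwD
        · exact fun hwK => hKsub hwK hwN
        · intro hwK
          have h1 : K = connectedComponentIn Nᶜ w := connectedComponentIn_eq hwK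
          have h2 : connectedComponentIn Nᶜ z = connectedComponentIn Nᶜ w :=
            connectedComponentIn_eq hwD
          exact hz2 (by rw [h1, ← h2]; exact mem_connectedComponentIn hz1)
    · intro w hw
      by_cases hwN : w ∈ N
      · exact ⟨N, Or.inl rfl, hwN⟩
      · exact ⟨N ∪ connectedComponentIn Nᶜ w, Or.inr ⟨w, hwN, hw, rfl⟩,
          Or.inr (mem_connectedComponentIn hwN)⟩
  rw [← hcup]
  apply isPreconnected_sUnion p
  · rintro S (rfl | ⟨z, hz1, hz2, rfl⟩)
    · exact hpN
    · exact Or.inl hpN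
  · rintro S (rfl | ⟨z, hz1, hz2, rfl⟩)
    · exact hNconn.isPreconnected
    · obtain ⟨y, hyD, hyN⟩ := comp_meets_closure hNopen ⟨p, hpN⟩ hz1
      have h1 : IsPreconnected (N ∪ {y}) :=
        hNconn.isPreconnected.subset_closure subset_union_left
          (union_subset subset_closure (singleton_subset_iff.2 hyN))
      have h2 : IsPreconnected (connectedComponentIn Nᶜ z) :=
        (isConnected_connectedComponentIn_iff.2 hz1).isPreconnected
      have h3 := IsPreconnected.union y (mem_union_right _ (mem_singleton y)) hyD h1 h2
      have h4 : (N ∪ {y}) ∪ connectedComponentIn Nᶜ z = N ∪ connectedComponentIn Nᶜ z := by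
        rw [union_assoc, union_eq_self_of_subset_left (singleton_subset_iff.2 hyD)]
      rwa [h4] at h3

end AuxNCstar

open Metric

/-- If G is a finite graph with NC*(G) connected, then for every p ∈ G the
complement G \ {p} has at most two connected components: among any three points of G \ {p},
two lie in the same component. -/
theorem stmt10 {G : Type*} [MetricSpace G] [CompactSpace G] [ConnectedSpace G] [Nontrivial G]
    (hfg : IsFiniteGraph G) (hconn : ConnectedSpace (NCstar G)) :
    ∀ p a b c : G, a ≠ p → b ≠ p → c ≠ p →
      (connectedComponentIn ({p}ᶜ) a = connectedComponentIn ({p}ᶜ) b ∨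
       connectedComponentIn ({p}ᶜ) a = connectedComponentIn ({p}ᶜ) c ∨
       connectedComponentIn ({p}ᶜ) b = connectedComponentIn ({p}ᶜ) c) := by
  intro p a b c ha hb hc
  by_contra hcon
  push_neg at hcon
  obtain ⟨hab, hac, hbc⟩ := hcon
  haveI hlc : LocallyConnectedSpace G := finiteGraph_locallyConnected hfg
  classical
  have hmemc : ∀ x : G, x ≠ p → x ∈ ({p}ᶜ : Set G) := fun x hx => by simpa using hx
  have hopenc : IsOpen ({p}ᶜ : Set G) := isClosed_singleton.isOpen_compl
  -- δ's for a,b,c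
  have hballs : ∀ x : G, x ≠ p → ∃ δ > 0,
      ball x δ ⊆ connectedComponentIn ({p}ᶜ) x := by
    intro x hx
    have hCopen : IsOpen (connectedComponentIn ({p}ᶜ) x) := hopenc.connectedComponentIn
    exact Metric.isOpen_iff.1 hCopen x (mem_connectedComponentIn (hmemc x hx))
  obtain ⟨δa, hδa, hballa⟩ := hballs a ha
  obtain ⟨δb, hδb, hballb⟩ := hballs b hb
  obtain ⟨δc, hδc, hballc⟩ := hballs c hc
  set δ : ℝ := min δa (min δb δc) with hδdef
  have hδ : 0 < δ := lt_min hδa (lt_min hδb hδc)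
  have hballx : ∀ x ∈ ({a, b, c} : Set G), ball x δ ⊆ connectedComponentIn ({p}ᶜ) x := by
    rintro x (rfl | rfl | rfl)
    · exact (ball_subset_ball (min_le_left _ _)).trans hballa
    · exact (ball_subset_ball ((min_le_right _ _).trans (min_le_left _ _))).trans hballb
    · exact (ball_subset_ball ((min_le_right _ _).trans (min_le_right _ _))).trans hballc
  have hnex : ∀ x ∈ ({a, b, c} : Set G), x ≠ p := by rintro x (rfl | rfl | rfl) <;> assumption
  -- distinct components are disjoint
  have hdisj : ∀ x y : G, connectedComponentIn ({p}ᶜ) x ≠ connectedComponentIn ({p}ᶜ) y →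
      ∀ w, w ∈ connectedComponentIn ({p}ᶜ) x → w ∉ connectedComponentIn ({p}ᶜ) y := by
    intro x y hxy w hwx hwy
    exact hxy ((connectedComponentIn_eq hwx).trans (connectedComponentIn_eq hwy).symm)
  -- the clopen set P = {A ∈ NC* : p ∈ A}
  set P : Set (NCstar G) := {A | p ∈ (A.1 : Set G)} with hPdef
  have hedist : ∀ A B : NCstar G,
      EMetric.hausdorffEdist (A.1 : Set G) (B.1 : Set G) ≠ ⊤ := fun A B =>
    hausdorffEdist_ne_top_of_nonempty_of_bounded A.1.nonempty B.1.nonempty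
      A.1.isCompact.isBounded B.1.isCompact.isBounded
  have hdisteq : ∀ A B : NCstar G, dist A B = hausdorffDist (A.1 : Set G) (B.1 : Set G) := by
    intro A B
    rw [Subtype.dist_eq, NonemptyCompacts.dist_eq]
  -- Pᶜ is open
  have hPc_open : IsOpen Pᶜ := by
    rw [Metric.isOpen_iff]
    intro B hB
    have hBclosed : IsClosed (B.1 : Set G) := B.1.isCompact.isClosed
    have hr : 0 < infDist p (B.1 : Set G) :=
      (hBclosed.notMem_iff_infDist_pos B.1.nonempty).1 hB
    refine ⟨infDist p (B.1 : Set G), hr, ?_⟩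
    intro B' hB'
    rw [mem_ball, hdisteq] at hB'
    intro hpB'
    have hpB'' : p ∈ (B'.1 : Set G) := hpB'
    have h1 : infDist p (B.1 : Set G) ≤ infDist p (B'.1 : Set G) +
        hausdorffDist (B'.1 : Set G) (B.1 : Set G) :=
      infDist_le_infDist_add_hausdorffDist (hedist B' B)
    rw [infDist_zero_of_mem hpB''] at h1
    linarith
  -- P is open
  have hP_open : IsOpen P := by
    rw [Metric.isOpen_iff]
    intro A hA
    refine ⟨δ, hδ, ?_⟩
    intro B hB
    rw [mem_ball, hdisteq, hausdorffDist_comm] at hB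
    by_contra hpB
    -- B is contained in one component D of {p}ᶜ
    obtain ⟨b₀, hb₀⟩ := B.1.nonempty
    have hBsub : (B.1 : Set G) ⊆ connectedComponentIn ({p}ᶜ) b₀ :=
      B.2.1.isPreconnected.subset_connectedComponentIn hb₀
        (fun z hz => hmemc z (fun h => hpB (show p ∈ (B.1 : Set G) from h ▸ hz)))
    set D := connectedComponentIn ({p}ᶜ) b₀ with hDdef
    -- a suitable x gives the contradiction
    have finish : ∀ x : G, x ∈ ({a, b, c} : Set G) → x ∈ (A.1 : Set G) →
        connectedComponentIn ({p}ᶜ) x ≠ D → False := by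
      intro x hxmem hxA hxD
      have h1 : infDist x (B.1 : Set G) ≤ hausdorffDist (A.1 : Set G) (B.1 : Set G) :=
        infDist_le_hausdorffDist_of_mem hxA (hedist A B)
      have h2 : infDist x (B.1 : Set G) < δ := lt_of_le_of_lt h1 hB
      obtain ⟨y, hyB, hyd⟩ := (infDist_lt_iff B.1.nonempty).1 h2
      have hyx : y ∈ connectedComponentIn ({p}ᶜ) x := by
        apply hballx x hxmem
        rw [mem_ball, dist_comm]
        exact hyd
      exact hdisj x b₀ hxD y hyx (hBsub hyB)
    -- find such x
    by_cases hAe : ((A.1 : Set G)ᶜ).Nonempty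
    · obtain ⟨z, hz⟩ := hAe
      have hzp : z ≠ p := fun h => hz (h ▸ hA)
      set E := connectedComponentIn ({p}ᶜ) z with hEdef
      have hsubE : ((A.1 : Set G)ᶜ) ⊆ E :=
        A.2.2.subset_connectedComponentIn hz
          (fun w hw => hmemc w (fun h => hw (h ▸ hA)))
      have hinA : ∀ x : G, connectedComponentIn ({p}ᶜ) x ≠ E → x ∈ (A.1 : Set G) := by
        intro x hx
        by_contra hxA
        exact hx (connectedComponentIn_eq (hsubE hxA)).symm
      -- among a, b, c find one whose component is neither D nor E
      have pick : ∃ x ∈ ({a, b, c} : Set G),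
          connectedComponentIn ({p}ᶜ) x ≠ D ∧ connectedComponentIn ({p}ᶜ) x ≠ E := by
        by_contra hpick
        push_neg at hpick
        have key : ∀ x ∈ ({a, b, c} : Set G), connectedComponentIn ({p}ᶜ) x = D ∨
            connectedComponentIn ({p}ᶜ) x = E := by
          intro x hx
          by_cases h : connectedComponentIn ({p}ᶜ) x = D
          · exact Or.inl h
          · exact Or.inr (hpick x hx h)
        rcases key a (by simp) with h1' | h1' <;>
        rcases key b (by simp) with h2' | h2' <;>
        rcases key c (by simp) with h3' | h3' <;>
        first
          | exact hab (h1'.trans h2'.symm)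
          | exact hac (h1'.trans h3'.symm)
          | exact hbc (h2'.trans h3'.symm)
      obtain ⟨x, hxmem, hxD, hxE⟩ := pick
      exact finish x hxmem (hinA x hxE) hxD
    · rw [not_nonempty_iff_eq_empty, compl_empty_iff] at hAe
      have pick : ∃ x ∈ ({a, b, c} : Set G), connectedComponentIn ({p}ᶜ) x ≠ D := by
        by_contra hpick
        push_neg at hpick
        exact hab ((hpick a (by simp)).trans (hpick b (by simp)).symm)
      obtain ⟨x, hxmem, hxD⟩ := pick
      exact finish x hxmem (by rw [hAe]; trivial) hxD
  -- elements on both sides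
  have hGelem : ∃ A : NCstar G, A ∈ P := by
    refine ⟨⟨⟨⟨univ, isCompact_univ⟩, univ_nonempty⟩, ?_, ?_⟩, mem_univ p⟩
    · exact isConnected_univ
    · show IsPreconnected ((univ : Set G)ᶜ)
      rw [compl_univ]
      exact isPreconnected_empty
  have hKelem : ∃ A : NCstar G, A ∈ Pᶜ := by
    obtain ⟨K, hKcomp, hKconn, hKcompl, hpK⟩ := exists_nc_avoiding (p := p) (a := a) ha
    exact ⟨⟨⟨⟨K, hKcomp⟩, hKconn.nonempty⟩, hKconn, hKcompl⟩, hpK⟩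
  obtain ⟨AG, hAG⟩ := hGelem
  obtain ⟨AK, hAK⟩ := hKelem
  haveI := hconn
  have hpre : IsPreconnected (univ : Set (NCstar G)) := isPreconnected_univ
  obtain ⟨x, -, hx1, hx2⟩ := hpre P Pᶜ hP_open hPc_open
    (by rw [union_compl_self]) ⟨AG, mem_univ _, hAG⟩ ⟨AK, mem_univ _, hAK⟩
  exact hx2 hx1
end

section
/- Let G be a finite graph with exactly one cut-point p, and suppose G \ {p} has exactly two components U and V, each of which is connected. Then K = U ∪ {p} and M = V ∪ {p} are subcontinua of G with no cut-points (i.e., tangles), so G is the junction of two tangles. -/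
open TopologicalSpace Set

/-- A tangle: a finite graph without cut-points. -/
def IsTangle (G : Type*) [TopologicalSpace G] : Prop :=
  IsFiniteGraph G ∧ ∀ p : G, IsPreconnected ({p}ᶜ : Set G)

/-!
`K = U ∪ {p}` is the complement of the open set `V`, hence closed, and it is the closure of the
connected set `U` because `G` is connected. An arc of `G` meets `K` in a closed subset whose
frontier inside the arc is at most the point `p`; in `[0, 1]` such a set is connected, so the
trace is either contained in `{p}` or is a subarc, and these subarcs make `K` a finite graph.
Removing `p` from `K` leaves `U`. For `x ∈ U`, collapsing `V` to `p` is a continuous retraction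
of `G \ {x}` onto `K \ {x}`, and `G \ {x}` is connected because `p` is the only cut-point.
-/

open Topology

theorem IsClosed.isPreconnected_of_frontier_subsingleton {X : Type*} [TopologicalSpace X]
    [PreconnectedSpace X] {T : Set X} (hT : IsClosed T) (hfr : (frontier T).Subsingleton) :
    IsPreconnected T := by
  rw [isPreconnected_iff_subset_of_fully_disjoint_closed hT]
  intro u v hu hv hTuv huv
  wlog hfv : Disjoint (frontier T) v generalizing u v
  · have hfu : Disjoint (frontier T) u := by
      rw [not_disjoint_iff] at hfv
      obtain ⟨b, hbT, hbv⟩ := hfv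
      exact disjoint_left.mpr fun a haT hau => disjoint_left.mp huv hau (hfr haT hbT ▸ hbv)
    exact (this v u hv hu (union_comm u v ▸ hTuv) huv.symm hfu).symm
  have hTv : T ∩ v = interior T ∩ uᶜ := by
    ext x
    refine ⟨fun ⟨hxT, hxv⟩ => ⟨?_, disjoint_right.mp huv hxv⟩,
      fun ⟨hxi, hxu⟩ => ⟨interior_subset hxi, (hTuv (interior_subset hxi)).resolve_left hxu⟩⟩
    by_contra hxi
    exact disjoint_left.mp hfv (hT.frontier_eq ▸ ⟨hxT, hxi⟩) hxv
  have hclopen : IsClopen (T ∩ v) := ⟨hT.inter hv, hTv ▸ isOpen_interior.inter hu.isOpen_compl⟩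
  rcases isClopen_iff.mp hclopen with h | h
  · exact Or.inl fun x hx => (hTuv hx).resolve_right fun hxv => h.subset ⟨hx, hxv⟩
  · exact Or.inr fun x _ => (h ▸ mem_univ x : x ∈ T ∩ v).2

theorem IsCompact.nonempty_homeomorph_unitInterval {T : Set ℝ} (hc : IsCompact T)
    (hconn : IsPreconnected T) (hnt : T.Nontrivial) : Nonempty (unitInterval ≃ₜ T) := by
  have hT := eq_Icc_of_connected_compact ⟨hnt.nonempty, hconn⟩ hc
  have hlt : sInf T < sSup T := by
    obtain ⟨x, hx, y, hy, hxy⟩ := hnt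
    rw [hT] at hx hy
    by_contra! h
    exact hxy (by linarith [hx.1, hx.2, hy.1, hy.2] : x = y)
  exact ⟨(iccHomeoI _ _ hlt).symm.trans (Homeomorph.setCongr hT.symm)⟩

theorem arc_inter_subset_singleton_or_arc {X : Type*} [TopologicalSpace X] [T2Space X]
    {A K : Set X} {p : X} (hA : Nonempty (unitInterval ≃ₜ A)) (hK : IsClosed K)
    (hKp : IsOpen (K \ {p})) : A ∩ K ⊆ {p} ∨ Nonempty (unitInterval ≃ₜ ↥(A ∩ K)) := by
  obtain ⟨e⟩ := hA
  set ψ : unitInterval → X := (↑) ∘ e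
  have hψ : IsEmbedding ψ := IsEmbedding.subtypeVal.comp e.isEmbedding
  have hAK : A ∩ K ⊆ range ψ := fun x hx => ⟨e.symm ⟨x, hx.1⟩, by simp [ψ]⟩
  set S := ψ ⁻¹' (A ∩ K)
  have hS : IsClosed S := by
    have : S = ψ ⁻¹' K := by ext x; simp [S, ψ]
    exact this ▸ hK.preimage hψ.continuous
  have hfr : frontier S ⊆ ψ ⁻¹' {p} := by
    intro x hx
    by_contra hxp
    rw [hS.frontier_eq] at hx
    refine hx.2 (interior_maximal (fun y hy => ?_) (hKp.preimage hψ.continuous) ⟨hx.1.2, hxp⟩)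
    exact ⟨(e y).2, hy.1⟩
  rcases S.subsingleton_or_nontrivial with hsub | hnt
  · left
    have hint : interior S = ∅ := by
      rcases hsub.eq_empty_or_singleton with h | ⟨x, h⟩ <;> rw [h]
      · exact interior_empty
      · exact interior_singleton x
    calc A ∩ K = ψ '' S := (image_preimage_eq_of_subset hAK).symm
      _ ⊆ ψ '' (ψ ⁻¹' {p}) := by
          refine image_mono (fun x hx => hfr ?_)
          rw [hS.frontier_eq, hint, sdiff_empty]
          exact hx
      _ ⊆ {p} := image_preimage_subset ψ {p}
  · right
    have hSconn := hS.isPreconnected_of_frontier_subsingleton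
      ((subsingleton_singleton.preimage hψ.injective).anti hfr)
    obtain ⟨f⟩ := (hS.isCompact.image continuous_subtype_val).nonempty_homeomorph_unitInterval
      (hSconn.image _ continuous_subtype_val.continuousOn) (hnt.image Subtype.val_injective)
    exact ⟨f.trans ((IsEmbedding.subtypeVal.homeomorphImage S).symm.trans
      (hψ.homeomorphOfSubsetRange hAK))⟩

theorem IsFiniteGraph.subtype_of_isOpen_diff_singleton {G : Type*} [TopologicalSpace G]
    [T2Space G] (hG : IsFiniteGraph G) {K : Set G} {p : G} (hK : IsClosed K)
    (hKp : IsOpen (K \ {p})) (hdense : K ⊆ closure (K \ {p})) : IsFiniteGraph K := by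
  classical
  obtain ⟨𝒜, hcov, harc, hfin⟩ := hG
  have hmem : ∀ x ∈ K, ∃ A ∈ 𝒜, ¬ A ∩ K ⊆ {p} ∧ x ∈ A := by
    intro x hx
    have hx' : x ∈ closure (⋃ A ∈ 𝒜, A ∩ (K \ {p})) := by
      rw [← iUnion₂_inter, hcov, univ_inter]
      exact hdense hx
    rw [Finset.closure_biUnion, mem_iUnion₂] at hx'
    obtain ⟨A, hA, hxA⟩ := hx'
    obtain ⟨e⟩ := harc A hA
    have hAc : IsClosed A := (isCompact_iff_compactSpace.mpr e.compactSpace).isClosed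
    obtain ⟨y, hyA, hyK, hyp⟩ := closure_nonempty_iff.mp ⟨x, hxA⟩
    exact ⟨A, hA, fun h => hyp (h ⟨hyA, hyK⟩), hAc.closure_subset_iff.mpr inter_subset_left hxA⟩
  refine ⟨(𝒜.filter fun A => ¬ A ∩ K ⊆ {p}).image fun A => ((↑) ⁻¹' A : Set K), ?_, ?_, ?_⟩
  · refine eq_univ_of_forall fun x => ?_
    obtain ⟨A, hA, hAp, hxA⟩ := hmem x x.2
    simp only [mem_iUnion, Finset.mem_image, Finset.mem_filter, exists_prop]
    exact ⟨_, ⟨A, ⟨hA, hAp⟩, rfl⟩, hxA⟩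
  · simp only [Finset.mem_image, Finset.mem_filter, forall_exists_index, and_imp]
    rintro _ A hA hAp rfl
    obtain ⟨f⟩ := (arc_inter_subset_singleton_or_arc (harc A hA) hK hKp).resolve_left hAp
    refine ⟨f.trans ((Homeomorph.setCongr ?_).trans
      (IsEmbedding.subtypeVal.homeomorphImage ((↑) ⁻¹' A : Set K)).symm)⟩
    rw [Subtype.image_preimage_coe, inter_comm]
  · simp only [Finset.mem_image, Finset.mem_filter]
    rintro _ ⟨A, ⟨hA, -⟩, rfl⟩ _ ⟨B, ⟨hB, -⟩, rfl⟩ hne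
    exact Set.Finite.preimage (f := Subtype.val) Subtype.val_injective.injOn
      (hfin A hA B hB fun h => hne (h ▸ rfl))

theorem IsPreconnected.diff_of_frontier_subset_singleton {X : Type*} [TopologicalSpace X]
    {S V : Set X} {p : X} (hS : IsPreconnected S) (hpS : p ∈ S) (hpV : p ∉ V)
    (hV : frontier V ⊆ {p}) : IsPreconnected (S \ V) := by
  classical
  -- `S \ V` is the image of `S` under the retraction sending `V` to `p`
  have hcont : Continuous (V.piecewise (fun _ => p) id) :=
    continuous_const.piecewise (fun x hx => (hV hx).symm) continuous_id
  convert hS.image _ hcont.continuousOn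
  ext y
  constructor
  · intro hy
    exact ⟨y, hy.1, by simp [hy.2]⟩
  · rintro ⟨x, hxS, rfl⟩
    by_cases hxV : x ∈ V
    · simpa [hxV] using (⟨hpS, hpV⟩ : p ∈ S \ V)
    · simpa [hxV] using (⟨hxS, hxV⟩ : x ∈ S \ V)

section Junction

variable {G : Type*} {p : G} {U V : Set G}

theorem notMem_of_union_eq_compl_singleton (hUV : U ∪ V = {p}ᶜ) : p ∉ U :=
  fun h => hUV.subset (Or.inl h) rfl

theorem compl_union_singleton_eq (hUV : U ∪ V = {p}ᶜ) (hdisj : Disjoint U V) :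
    (U ∪ {p})ᶜ = V := by
  ext x
  have hx := Set.ext_iff.mp hUV x
  have hxUV : x ∈ U → x ∉ V := fun h => disjoint_left.mp hdisj h
  simp only [mem_compl_iff, mem_union, mem_singleton_iff] at hx ⊢
  tauto

variable [TopologicalSpace G]

theorem isClosed_union_singleton (hUV : U ∪ V = {p}ᶜ) (hdisj : Disjoint U V) (hVo : IsOpen V) :
    IsClosed (U ∪ {p}) := by
  rw [← isOpen_compl_iff, compl_union_singleton_eq hUV hdisj]
  exact hVo

theorem closure_eq_union_singleton [PreconnectedSpace G] (hUV : U ∪ V = {p}ᶜ)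
    (hdisj : Disjoint U V) (hUo : IsOpen U) (hVo : IsOpen V) (hU : U.Nonempty) :
    closure U = U ∪ {p} := by
  have hclU : closure U ⊆ U ∪ {p} :=
    (isClosed_union_singleton hUV hdisj hVo).closure_subset_iff.mpr subset_union_left
  refine hclU.antisymm (union_subset subset_closure (singleton_subset_iff.mpr ?_))
  by_contra hp
  have hUc : IsClosed U := closure_subset_iff_isClosed.mp fun x hx =>
    (hclU hx).resolve_right fun hxp => hp (hxp ▸ hx)
  rcases isClopen_iff.mp ⟨hUc, hUo⟩ with h | h
  · exact hU.ne_empty h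
  · exact notMem_of_union_eq_compl_singleton hUV (eq_univ_iff_forall.mp h p)

theorem frontier_subset_singleton_of_union_eq_compl (hUV : U ∪ V = {p}ᶜ)
    (hdisj : Disjoint U V) (hUo : IsOpen U) (hVo : IsOpen V) : frontier V ⊆ {p} := by
  have hclV : closure V ⊆ V ∪ {p} :=
    (isClosed_union_singleton (union_comm U V ▸ hUV) hdisj.symm hUo).closure_subset_iff.mpr
      subset_union_left
  rw [hVo.frontier_eq]
  exact fun x hx => (hclV hx.1).resolve_left hx.2

theorem isPreconnected_union_singleton_diff
    (huniq : ∀ q : G, ¬ IsPreconnected ({q}ᶜ : Set G) → q = p)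
    (hUV : U ∪ V = {p}ᶜ) (hdisj : Disjoint U V) (hUo : IsOpen U) (hVo : IsOpen V)
    (hUc : IsPreconnected U) {x : G} (hx : x ∈ U ∪ {p}) : IsPreconnected ((U ∪ {p}) \ {x}) := by
  have hpU := notMem_of_union_eq_compl_singleton hUV
  rcases hx with hxU | rfl
  · have hxp : x ≠ p := fun h => hpU (h ▸ hxU)
    have hxc : IsPreconnected ({x}ᶜ : Set G) := by
      by_contra h
      exact hxp (huniq x h)
    have hK : (U ∪ {p}) \ {x} = {x}ᶜ \ V := by
      rw [← compl_union_singleton_eq hUV hdisj, sdiff_compl, sdiff_eq, inter_comm]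
    rw [hK]
    exact hxc.diff_of_frontier_subset_singleton hxp.symm
      (notMem_of_union_eq_compl_singleton (union_comm U V ▸ hUV))
      (frontier_subset_singleton_of_union_eq_compl hUV hdisj hUo hVo)
  · rwa [union_sdiff_right, sdiff_singleton_eq_self hpU]

theorem isTangle_union_singleton [T2Space G] [ConnectedSpace G] (hfg : IsFiniteGraph G)
    (huniq : ∀ q : G, ¬ IsPreconnected ({q}ᶜ : Set G) → q = p)
    (hUV : U ∪ V = {p}ᶜ) (hdisj : Disjoint U V) (hUo : IsOpen U) (hVo : IsOpen V)
    (hUc : IsConnected U) :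
    IsClosed (U ∪ {p}) ∧ IsConnected (U ∪ {p}) ∧ IsTangle (U ∪ {p} : Set G) := by
  have hK := isClosed_union_singleton hUV hdisj hVo
  have hcl := closure_eq_union_singleton hUV hdisj hUo hVo hUc.nonempty
  have hKp : (U ∪ {p}) \ {p} = U := by
    rw [union_sdiff_right, sdiff_singleton_eq_self (notMem_of_union_eq_compl_singleton hUV)]
  refine ⟨hK, hcl ▸ hUc.closure,
    hfg.subtype_of_isOpen_diff_singleton hK (hKp ▸ hUo) (by rw [hKp, hcl]), fun x => ?_⟩
  rw [← IsInducing.subtypeVal.isPreconnected_image, image_val_compl, image_singleton]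
  exact isPreconnected_union_singleton_diff huniq hUV hdisj hUo hVo hUc.isPreconnected x.2

end Junction

theorem stmt11_general {G : Type*} [MetricSpace G] [ConnectedSpace G]
    (hfg : IsFiniteGraph G) (p : G)
    (huniq : ∀ q : G, ¬ IsPreconnected (({q}ᶜ : Set G)) → q = p)
    (U V : Set G) (hUV : U ∪ V = {p}ᶜ) (hdisj : Disjoint U V)
    (hUo : IsOpen U) (hVo : IsOpen V)
    (hUc : IsConnected U) (hVc : IsConnected V) :
    (IsClosed (U ∪ {p}) ∧ IsConnected (U ∪ {p}) ∧ IsTangle (U ∪ {p} : Set G)) ∧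
    (IsClosed (V ∪ {p}) ∧ IsConnected (V ∪ {p}) ∧ IsTangle (V ∪ {p} : Set G)) :=
  ⟨isTangle_union_singleton hfg huniq hUV hdisj hUo hVo hUc,
    isTangle_union_singleton hfg huniq (by rwa [union_comm]) hdisj.symm hVo hUo hVc⟩

/-- If G is a finite graph with exactly one cut-point p and G \ {p} has
exactly two components U and V, then K = U ∪ {p} and M = V ∪ {p} are subcontinua of G
which are tangles; so G is the junction of two tangles. -/
theorem stmt11 {G : Type*} [MetricSpace G] [CompactSpace G] [ConnectedSpace G] [Nontrivial G]
    (hfg : IsFiniteGraph G) (p : G)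
    (hcut : ¬ IsPreconnected (({p}ᶜ : Set G)))
    (huniq : ∀ q : G, ¬ IsPreconnected (({q}ᶜ : Set G)) → q = p)
    (U V : Set G) (hUV : U ∪ V = {p}ᶜ) (hdisj : Disjoint U V)
    (hUo : IsOpen U) (hVo : IsOpen V)
    (hUc : IsConnected U) (hVc : IsConnected V) :
    (IsClosed (U ∪ {p}) ∧ IsConnected (U ∪ {p}) ∧ IsTangle (U ∪ {p} : Set G)) ∧
    (IsClosed (V ∪ {p}) ∧ IsConnected (V ∪ {p}) ∧ IsTangle (V ∪ {p} : Set G)) :=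
  stmt11_general hfg p huniq U V hUV hdisj hUo hVo hUc hVc
end

section
/- Let X be a connected topological space, p ∈ X, and suppose X \ {p} = U ∪ V with U, V nonempty, disjoint, open in X \ {p}, and U connected. Then U ∪ {p} is connected. -/
open Set

/-- If X is connected, X \ {p} = U ∪ V with U, V nonempty disjoint sets open
in X \ {p}, and U is connected, then U ∪ {p} is connected. -/
theorem stmt12 {X : Type*} [TopologicalSpace X] [ConnectedSpace X] (p : X)
    (U V : Set X) (hUV : U ∪ V = {p}ᶜ) (hd : Disjoint U V)
    (hUne : U.Nonempty) (hVne : V.Nonempty)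
    (hUo : IsOpen ((Subtype.val ⁻¹' U) : Set ({p}ᶜ : Set X)))
    (hVo : IsOpen ((Subtype.val ⁻¹' V) : Set ({p}ᶜ : Set X)))
    (hUc : IsConnected U) :
    IsConnected (U ∪ {p}) := by
  have hUsub : U ⊆ {p}ᶜ := hUV ▸ subset_union_left
  have hVsub : V ⊆ {p}ᶜ := hUV ▸ subset_union_right
  obtain ⟨OU, hOU, hOUeq⟩ := isOpen_induced_iff.mp hUo
  obtain ⟨OV, hOV, hOVeq⟩ := isOpen_induced_iff.mp hVo
  have hUeq : U = OU ∩ {p}ᶜ := by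
    ext x
    constructor
    · intro hx
      have hxp : x ∈ ({p}ᶜ : Set X) := hUsub hx
      have := congrArg (fun s => (⟨x, hxp⟩ : ({p}ᶜ : Set X)) ∈ s) hOUeq
      simp only [mem_preimage] at this
      exact ⟨this.mpr hx, hxp⟩
    · rintro ⟨hxO, hxp⟩
      have := congrArg (fun s => (⟨x, hxp⟩ : ({p}ᶜ : Set X)) ∈ s) hOUeq
      simp only [mem_preimage] at this
      exact this.mp hxO
  have hVeq : V = OV ∩ {p}ᶜ := by
    ext x
    constructor
    · intro hx
      have hxp : x ∈ ({p}ᶜ : Set X) := hVsub hx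
      have := congrArg (fun s => (⟨x, hxp⟩ : ({p}ᶜ : Set X)) ∈ s) hOVeq
      simp only [mem_preimage] at this
      exact ⟨this.mpr hx, hxp⟩
    · rintro ⟨hxO, hxp⟩
      have := congrArg (fun s => (⟨x, hxp⟩ : ({p}ᶜ : Set X)) ∈ s) hOVeq
      simp only [mem_preimage] at this
      exact this.mp hxO
  -- Key lemma: there is no pair of open sets w, o with U ⊆ w, p ∈ o, U ∩ o = ∅, p ∉ w.
  have key : ∀ w o : Set X, IsOpen w → IsOpen o → U ⊆ w → p ∈ o → U ∩ o = ∅ →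
      p ∉ w → False := by
    intro w o hw ho hUw hpo hUo' hpw
    have hpre : IsPreconnected (univ : Set X) := isPreconnected_univ
    have hcov : (univ : Set X) ⊆ (OU ∩ w) ∪ (OV ∪ o) := by
      intro x _
      by_cases hx : x = p
      · exact Or.inr (Or.inr (hx ▸ hpo))
      · have : x ∈ U ∪ V := hUV ▸ hx
        rcases this with hxU | hxV
        · exact Or.inl ⟨(hUeq ▸ hxU).1, hUw hxU⟩
        · exact Or.inr (Or.inl (hVeq ▸ hxV).1)
    obtain ⟨u0, hu0⟩ := hUne
    obtain ⟨v0, hv0⟩ := hVne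
    have h1 : ((univ : Set X) ∩ (OU ∩ w)).Nonempty :=
      ⟨u0, trivial, (hUeq ▸ hu0).1, hUw hu0⟩
    have h2 : ((univ : Set X) ∩ (OV ∪ o)).Nonempty :=
      ⟨v0, trivial, Or.inl (hVeq ▸ hv0).1⟩
    obtain ⟨x, -, ⟨hxOU, hxw⟩, hx2⟩ :=
      hpre (OU ∩ w) (OV ∪ o) (hOU.inter hw) (hOV.union ho) hcov h1 h2
    have hxp : x ∈ ({p}ᶜ : Set X) := by
      intro hxeq
      exact hpw (mem_singleton_iff.mp hxeq ▸ hxw)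
    have hxU : x ∈ U := hUeq ▸ ⟨hxOU, hxp⟩
    rcases hx2 with hxOV | hxo
    · exact absurd (hd.ne_of_mem hxU (hVeq ▸ ⟨hxOV, hxp⟩)) (fun h => h rfl)
    · exact eq_empty_iff_forall_notMem.mp hUo' x ⟨hxU, hxo⟩
  constructor
  · exact ⟨p, Or.inr rfl⟩
  intro u v hu hv hcov ⟨a, ha, hau⟩ ⟨b, hb, hbv⟩
  by_cases hmix : (U ∩ (u ∩ v)).Nonempty
  · exact hmix.imp fun x hx => ⟨Or.inl hx.1, hx.2⟩
  have hUcov : U ⊆ u ∪ v := fun x hx => hcov (Or.inl hx)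
  have hone : U ∩ u = ∅ ∨ U ∩ v = ∅ := by
    by_contra h
    push_neg at h
    exact hmix (hUc.isPreconnected u v hu hv hUcov
      h.1 h.2)
  by_cases hpu : p ∈ u
  · by_cases hpv : p ∈ v
    · exact ⟨p, Or.inr rfl, hpu, hpv⟩
    rcases hone with hUu | hUv
    · -- U ⊆ v, p ∈ u, U ∩ u = ∅, p ∉ v
      have hUv' : U ⊆ v := fun x hx => (hUcov hx).resolve_left
        (fun h => eq_empty_iff_forall_notMem.mp hUu x ⟨hx, h⟩)
      exact absurd (key v u hv hu hUv' hpu hUu hpv) id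
    · -- U ⊆ u, b witnesses (U∪{p}) ∩ v nonempty; b ∈ U impossible, so b = p ∈ v, contra hpv
      rcases hb with hbU | hbp
      · exact (eq_empty_iff_forall_notMem.mp hUv b ⟨hbU, hbv⟩).elim
      · exact absurd (mem_singleton_iff.mp hbp ▸ hbv) hpv
  · -- p ∉ u, so a ∈ U ∩ u, hence U ∩ u ≠ ∅, so U ∩ v = ∅, U ⊆ u
    have haU : a ∈ U := by
      rcases ha with h | h
      · exact h
      · exact absurd (mem_singleton_iff.mp h ▸ hau) hpu
    have hUv : U ∩ v = ∅ := by
      rcases hone with h | h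
      · exact (eq_empty_iff_forall_notMem.mp h a ⟨haU, hau⟩).elim
      · exact h
    have hUu' : U ⊆ u := fun x hx => (hUcov hx).resolve_right
      (fun h => eq_empty_iff_forall_notMem.mp hUv x ⟨hx, h⟩)
    have hpv : p ∈ v := by
      have := hcov (Or.inr rfl : p ∈ U ∪ {p})
      rcases this with h | h
      · exact absurd h hpu
      · exact h
    exact absurd (key u v hu hv hUu' hpv hUv hpu) id
end

section
/- Let G be a tangle that is not a simple closed curve. Then G has no end-points and contains no cycles (where a cycle is a simple closed curve S ⊆ G such that S minus some point of S is open in G). -/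
open TopologicalSpace Set

/-
A tangle has no cut-points, so it suffices to exhibit a cut-point in each case. Both come from
one observation: if `U` is open, `U ∪ {q}` is closed, and neither `U` nor the complement of
`U ∪ {q}` is empty, then `{q}ᶜ` is the disjoint union of these two nonempty open sets.
For an end-point `p` with arc neighbourhood `e : [0, 1] → J`, take `U = e [0, b)` and `q = e b`
for small `b > 0`. For a cycle `S` with `S \ {p}` open, take `U = S \ {p}` and `q = p`; here
`S ≠ G` because `G` is not a simple closed curve.
-/

instance : Nontrivial Circle :=
  nontrivial_of_ne 1 (Circle.exp Real.pi) fun h => by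
    have h2 := congrArg ((↑) : Circle → ℂ) h
    simp only [Circle.coe_exp, Complex.exp_pi_mul_I] at h2
    norm_num at h2

section CutPoint

variable {X : Type*} [TopologicalSpace X]

theorem not_isPreconnected_compl_singleton_of_isOpen_of_isClosed_insert {q : X} {U : Set X}
    (hU : IsOpen U) (hqU : IsClosed (insert q U)) (hq : q ∉ U) (hne : U.Nonempty)
    (hne' : (insert q U)ᶜ.Nonempty) : ¬ IsPreconnected ({q}ᶜ : Set X) := by
  intro hconn
  obtain ⟨x, -, hxU, hxU'⟩ := hconn U (insert q U)ᶜ hU hqU.isOpen_compl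
    (fun x hx => by by_cases hxU : x ∈ U <;> simp_all)
    (let ⟨u, hu⟩ := hne; ⟨u, ne_of_mem_of_not_mem hu hq, hu⟩)
    (let ⟨v, hv⟩ := hne'; ⟨v, fun h => hv (h ▸ mem_insert q U), hv⟩)
  exact hxU' (mem_insert_of_mem q hxU)

theorem isOpen_image_val_of_subset_interior {J : Set X} {W : Set J} (hW : IsOpen W)
    (hWJ : (↑) '' W ⊆ interior J) : IsOpen ((↑) '' W : Set X) := by
  obtain ⟨V, hV, rfl⟩ := isOpen_induced_iff.mp hW
  rw [Subtype.image_preimage_coe] at hWJ ⊢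
  rw [show J ∩ V = interior J ∩ V from
    Subset.antisymm (fun x hx => ⟨hWJ hx, hx.2⟩) (fun x hx => ⟨interior_subset hx.1, hx.2⟩)]
  exact isOpen_interior.inter hV

variable [T2Space X]

theorem exists_not_isPreconnected_compl_singleton_of_arc_mem_nhds {p : X} {J : Set X}
    (hJ : J ∈ nhds p) (e : unitInterval ≃ₜ J) (he : (e 0 : X) = p) :
    ∃ q : X, ¬ IsPreconnected ({q}ᶜ : Set X) := by
  set f : unitInterval → X := fun s => e s
  have hf : Continuous f := continuous_subtype_val.comp e.continuous
  have hf_inj : Function.Injective f := Subtype.val_injective.comp e.injective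
  have hint : f ⁻¹' interior J ∈ nhds 0 :=
    hf.continuousAt.preimage_mem_nhds ((show f 0 = p from he) ▸ interior_mem_nhds.mpr hJ)
  obtain ⟨a, ha0, ha⟩ := nhds_bot_basis.mem_iff.mp hint
  obtain ⟨b, hb0, hba⟩ := exists_between ha0
  have hb1 : b < 1 := hba.trans_le le_top
  refine ⟨f b, not_isPreconnected_compl_singleton_of_isOpen_of_isClosed_insert
    (U := f '' Iio b) ?_ ?_ ?_ ⟨p, 0, hb0, he⟩ ⟨f 1, ?_⟩⟩
  · rw [← image_image]
    refine isOpen_image_val_of_subset_interior (e.isOpenMap _ isOpen_Iio) ?_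
    rw [image_image]
    exact image_subset_iff.mpr fun s hs => ha (hs.trans hba)
  · rw [← image_insert_eq, Iio_insert]
    exact (isClosed_Iic.isCompact.image hf).isClosed
  · rw [hf_inj.mem_set_image]
    exact lt_irrefl b
  · rw [← image_insert_eq, Iio_insert, mem_compl_iff, hf_inj.mem_set_image]
    exact hb1.not_ge

theorem not_isPreconnected_compl_singleton_of_homeomorph_circle {S : Set X}
    (eS : S ≃ₜ Circle) (hS : S ≠ univ) {p : X} (hp : p ∈ S) (hSp : IsOpen (S \ {p})) :
    ¬ IsPreconnected ({p}ᶜ : Set X) := by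
  have : CompactSpace S := eS.symm.compactSpace
  have : Nontrivial S := eS.nontrivial
  obtain ⟨x, hx⟩ := exists_ne (⟨p, hp⟩ : S)
  refine not_isPreconnected_compl_singleton_of_isOpen_of_isClosed_insert hSp ?_
    (fun h => h.2 rfl) ⟨x, x.2, fun h => hx (Subtype.ext h)⟩ ?_
  · rw [insert_sdiff_singleton, insert_eq_of_mem hp]
    exact (isCompact_iff_compactSpace.mpr ‹_›).isClosed
  · rw [insert_sdiff_singleton, insert_eq_of_mem hp, nonempty_compl]
    exact hS

end CutPoint

theorem stmt13_general {G : Type*} [MetricSpace G]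
    (hT : IsTangle G) (hnc : ¬ Nonempty (G ≃ₜ Circle)) :
    (¬ ∃ (p : G) (J : Set G), J ∈ nhds p ∧ ∃ e : unitInterval ≃ₜ J, (e 0 : G) = p) ∧
    (¬ ∃ S : Set G, Nonempty (S ≃ₜ Circle) ∧ ∃ p ∈ S, IsOpen (S \ {p})) := by
  obtain ⟨-, hcut⟩ := hT
  constructor
  · rintro ⟨p, J, hJ, e, he⟩
    obtain ⟨q, hq⟩ := exists_not_isPreconnected_compl_singleton_of_arc_mem_nhds hJ e he
    exact hq (hcut q)
  · rintro ⟨S, ⟨eS⟩, p, hp, hSp⟩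
    have hS : S ≠ univ := fun h =>
      hnc ⟨(Homeomorph.Set.univ G).symm.trans ((Homeomorph.setCongr h.symm).trans eS)⟩
    exact not_isPreconnected_compl_singleton_of_homeomorph_circle eS hS hp hSp (hcut p)

/-- A tangle which is not a simple closed curve has no end-points
(points with an arc neighborhood of which they are an endpoint) and contains no cycles
(simple closed curves S ⊆ G with S \ {p} open in G for some p ∈ S). -/
theorem stmt13 {G : Type*} [MetricSpace G] [CompactSpace G] [ConnectedSpace G] [Nontrivial G]
    (hT : IsTangle G) (hnc : ¬ Nonempty (G ≃ₜ Circle)) :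
    (¬ ∃ (p : G) (J : Set G), J ∈ nhds p ∧ ∃ e : unitInterval ≃ₜ J, (e 0 : G) = p) ∧
    (¬ ∃ S : Set G, Nonempty (S ≃ₜ Circle) ∧ ∃ p ∈ S, IsOpen (S \ {p})) :=
  stmt13_general hT hnc
end

section
/- Let G = K ∪ pq ∪ M be a finite graph where K and M are disjoint tangles and pq is an arc with K ∩ pq = {p} and M ∩ pq = {q}. If A is a subcontinuum of G with G \ A connected and A ∩ pq ≠ ∅, then either K ∪ pa ⊆ A or M ∪ qa ⊆ A for any point a ∈ A ∩ pq (where pa and qa denote the subarcs of pq from p and q to a respectively). -/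
open TopologicalSpace Set

/-- A finite graph (as a subspace) is compact. -/
lemma IsFiniteGraph.isCompact {G : Type*} [TopologicalSpace G] {S : Set G}
    (h : IsFiniteGraph S) : IsCompact S := by
  obtain ⟨𝒜, hcov, hhom, -⟩ := h
  have hc : ∀ B ∈ 𝒜, IsCompact (B : Set S) := fun B hB =>
    isCompact_iff_compactSpace.mpr (hhom B hB).some.compactSpace
  have hu : IsCompact (Set.univ : Set S) := by
    rw [← hcov]
    exact 𝒜.finite_toSet.isCompact_biUnion hc
  have := hu.image continuous_subtype_val
  rwa [Subtype.coe_image_univ] at this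

/-- Let G = K ∪ pq ∪ M be a finite graph, where K, M are disjoint tangles and
pq = L is an arc (parametrized by e : [0,1] ≃ₜ L with e 0 = p, e 1 = q) with K ∩ L = {p} and
M ∩ L = {q}. If A is a subcontinuum of G with G \ A connected that meets L in a point
a = e t₀, then K ∪ pa ⊆ A or M ∪ qa ⊆ A, where pa = e[0,t₀] and qa = e[t₀,1]. -/
theorem stmt18 {G : Type*} [MetricSpace G] [CompactSpace G] [ConnectedSpace G] [Nontrivial G]
    (hfg : IsFiniteGraph G)
    (K M L : Set G) (p q : G)
    (hK : IsTangle K) (hM : IsTangle M) (hKM : Disjoint K M)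
    (hunion : K ∪ L ∪ M = Set.univ)
    (hKL : K ∩ L = {p}) (hML : M ∩ L = {q})
    (e : unitInterval ≃ₜ L) (hep : (e 0 : G) = p) (heq : (e 1 : G) = q)
    (A : Set G) (hAcl : IsClosed A) (hAconn : IsConnected A) (hAc : IsPreconnected Aᶜ)
    (t₀ : unitInterval) (ha : (e t₀ : G) ∈ A) :
    K ∪ (Subtype.val '' (e '' {s : unitInterval | s ≤ t₀})) ⊆ A ∨
      M ∪ (Subtype.val '' (e '' {s : unitInterval | t₀ ≤ s})) ⊆ A := by
  set pa : Set G := Subtype.val '' (e '' {s : unitInterval | s ≤ t₀}) with hpa_def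
  set qa : Set G := Subtype.val '' (e '' {s : unitInterval | t₀ ≤ s}) with hqa_def
  set a : G := (e t₀ : G) with ha_def
  -- closedness of the pieces
  have hKc : IsClosed K := hK.1.isCompact.isClosed
  have hMc : IsClosed M := hM.1.isCompact.isClosed
  have hIic : IsCompact {s : unitInterval | s ≤ t₀} := by
    have : {s : unitInterval | s ≤ t₀} = Subtype.val ⁻¹' Set.Iic (t₀ : ℝ) := rfl
    rw [this]
    exact (isClosed_Iic.preimage continuous_subtype_val).isCompact
  have hIci : IsCompact {s : unitInterval | t₀ ≤ s} := by
    have : {s : unitInterval | t₀ ≤ s} = Subtype.val ⁻¹' Set.Ici (t₀ : ℝ) := rfl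
    rw [this]
    exact (isClosed_Ici.preimage continuous_subtype_val).isCompact
  have hpac : IsClosed pa :=
    (((hIic.image e.continuous).image continuous_subtype_val)).isClosed
  have hqac : IsClosed qa :=
    (((hIci.image e.continuous).image continuous_subtype_val)).isClosed
  set C₁ : Set G := K ∪ pa with hC₁
  set C₂ : Set G := M ∪ qa with hC₂
  have hC₁c : IsClosed C₁ := hKc.union hpac
  have hC₂c : IsClosed C₂ := hMc.union hqac
  -- membership descriptions
  have hpa_mem : ∀ x ∈ pa, ∃ s : unitInterval, s ≤ t₀ ∧ (e s : G) = x := by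
    rintro x ⟨y, ⟨s, hs, rfl⟩, rfl⟩; exact ⟨s, hs, rfl⟩
  have hqa_mem : ∀ x ∈ qa, ∃ s : unitInterval, t₀ ≤ s ∧ (e s : G) = x := by
    rintro x ⟨y, ⟨s, hs, rfl⟩, rfl⟩; exact ⟨s, hs, rfl⟩
  have einj : ∀ s u : unitInterval, (e s : G) = (e u : G) → s = u := by
    intro s u h
    exact e.injective (Subtype.val_injective h)
  -- C₁ ∩ C₂ ⊆ {a}
  have hcap : C₁ ∩ C₂ ⊆ {a} := by
    rintro x ⟨hx1, hx2⟩
    rcases hx1 with hxK | hxpa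
    · rcases hx2 with hxM | hxqa
      · exact absurd hxM (Set.disjoint_left.mp hKM hxK)
      · obtain ⟨s, hs, rfl⟩ := hqa_mem _ hxqa
        have hxp : (e s : G) ∈ K ∩ L := ⟨hxK, (e s).2⟩
        rw [hKL] at hxp
        have hs0 : s = 0 := einj s 0 (by rw [hep]; exact hxp)
        have ht0 : t₀ = 0 := le_antisymm (hs0 ▸ hs) t₀.2.1
        rw [hs0, ← ht0]; rfl
    · obtain ⟨s, hs, rfl⟩ := hpa_mem _ hxpa
      rcases hx2 with hxM | hxqa
      · have hxq : (e s : G) ∈ M ∩ L := ⟨hxM, (e s).2⟩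
        rw [hML] at hxq
        have hs1 : s = 1 := einj s 1 (by rw [heq]; exact hxq)
        have ht1 : t₀ = 1 := le_antisymm t₀.2.2 (hs1 ▸ hs)
        rw [hs1, ← ht1]; rfl
      · obtain ⟨u, hu, heu⟩ := hqa_mem _ hxqa
        have := einj u s heu
        subst this
        have : u = t₀ := le_antisymm hs hu
        rw [this]; rfl
  -- C₁ ∪ C₂ = univ
  have hcup : C₁ ∪ C₂ = Set.univ := by
    apply Set.eq_univ_of_univ_subset
    rw [← hunion]
    rintro x ((hxK | hxL) | hxM)
    · exact Or.inl (Or.inl hxK)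
    · set s : unitInterval := e.symm ⟨x, hxL⟩ with hs
      have hx : (e s : G) = x := by rw [hs, e.apply_symm_apply]
      rcases le_total s t₀ with h | h
      · exact Or.inl (Or.inr ⟨e s, ⟨s, h, rfl⟩, hx⟩)
      · exact Or.inr (Or.inr ⟨e s, ⟨s, h, rfl⟩, hx⟩)
    · exact Or.inr (Or.inl hxM)
  -- apply preconnectedness of Aᶜ
  have hdisj : Disjoint C₁ᶜ C₂ᶜ := by
    rw [Set.disjoint_iff_inter_eq_empty, ← Set.compl_union, hcup, Set.compl_univ]
  have hsub : Aᶜ ⊆ C₁ᶜ ∪ C₂ᶜ := by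
    intro x hx
    by_contra h
    simp only [Set.mem_union, Set.mem_compl_iff, not_or, not_not] at h
    have : x ∈ C₁ ∩ C₂ := ⟨by simpa using h.1, by simpa using h.2⟩
    have hxa : x = a := hcap this
    exact hx (hxa ▸ ha)
  rcases hAc.subset_or_subset hC₁c.isOpen_compl hC₂c.isOpen_compl hdisj hsub with h | h
  · refine Or.inl fun x hx => ?_
    by_contra hxA
    exact h hxA hx
  · refine Or.inr fun x hx => ?_
    by_contra hxA
    exact h hxA hx
end

section
/- Let X be a continuum and p a point of X. If X \ {p} = U₁ ∪ U₂ ∪ U₃ with U₁, U₂, U₃ nonempty pairwise disjoint open sets, then {A ∈ NC*(X) : A ⊆ U₁} is both open and closed in NC*(X). -/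
open TopologicalSpace Set Metric

/-- `{s | ↑s ⊆ U}` is open in `NonemptyCompacts X` when `U` is open. -/
lemma isOpen_subsets_of_isOpen {X : Type*} [MetricSpace X] {U : Set X} (hU : IsOpen U) :
    IsOpen {s : NonemptyCompacts X | (s : Set X) ⊆ U} := by
  rw [Metric.isOpen_iff]
  intro s hs
  obtain ⟨δ, hδ, hsub⟩ := s.isCompact.exists_thickening_subset_open hU hs
  refine ⟨δ, hδ, fun t ht => ?_⟩
  rw [mem_ball, NonemptyCompacts.dist_eq] at ht
  intro x hx
  obtain ⟨y, hy, hxy⟩ := exists_dist_lt_of_hausdorffDist_lt hx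
    (by rwa [hausdorffDist_comm] at ht) (edist_ne_top t s)
  exact hsub (mem_thickening_iff.2 ⟨y, hy, hxy⟩)

/-- `{s | (↑s ∩ V).Nonempty}` is open in `NonemptyCompacts X` when `V` is open. -/
lemma isOpen_meets_of_isOpen {X : Type*} [MetricSpace X] {V : Set X} (hV : IsOpen V) :
    IsOpen {s : NonemptyCompacts X | ((s : Set X) ∩ V).Nonempty} := by
  rw [Metric.isOpen_iff]
  intro s hs
  obtain ⟨x, hxs, hxV⟩ := hs
  obtain ⟨δ, hδ, hball⟩ := Metric.isOpen_iff.1 hV x hxV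
  refine ⟨δ, hδ, fun t ht => ?_⟩
  rw [mem_ball, NonemptyCompacts.dist_eq, hausdorffDist_comm] at ht
  obtain ⟨y, hy, hxy⟩ := exists_dist_lt_of_hausdorffDist_lt hxs ht (edist_ne_top s t)
  exact ⟨y, hy, hball (by rwa [mem_ball, dist_comm])⟩

/-- `{s | ↑s ⊆ C}` is closed in `NonemptyCompacts X` when `C` is closed. -/
lemma isClosed_subsets_of_isClosed {X : Type*} [MetricSpace X] {C : Set X} (hC : IsClosed C) :
    IsClosed {s : NonemptyCompacts X | (s : Set X) ⊆ C} := by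
  have : {s : NonemptyCompacts X | (s : Set X) ⊆ C}ᶜ
      = {s : NonemptyCompacts X | ((s : Set X) ∩ Cᶜ).Nonempty} := by
    ext s
    simp [Set.not_subset, Set.Nonempty, Set.mem_inter_iff]
  rw [← isOpen_compl_iff, this]
  exact isOpen_meets_of_isOpen hC.isOpen_compl

/-- If X is a continuum and X \ {p} = U₁ ∪ U₂ ∪ U₃ with U₁, U₂, U₃ nonempty
pairwise disjoint open sets, then {A ∈ NC*(X) : A ⊆ U₁} is both open and closed in NC*(X). -/
theorem stmt19 {X : Type*} [MetricSpace X] [CompactSpace X] [ConnectedSpace X] [Nontrivial X]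
    (p : X) (U₁ U₂ U₃ : Set X)
    (h1 : U₁.Nonempty) (h2 : U₂.Nonempty) (h3 : U₃.Nonempty)
    (ho1 : IsOpen U₁) (ho2 : IsOpen U₂) (ho3 : IsOpen U₃)
    (h12 : Disjoint U₁ U₂) (h13 : Disjoint U₁ U₃) (h23 : Disjoint U₂ U₃)
    (hU : U₁ ∪ U₂ ∪ U₃ = {p}ᶜ) :
    IsOpen {A : NCstar X | (A.1 : Set X) ⊆ U₁} ∧
      IsClosed {A : NCstar X | (A.1 : Set X) ⊆ U₁} := by
  -- key facts about p and the Uᵢ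
  have hp1 : p ∉ U₁ := fun h => by
    have : p ∈ U₁ ∪ U₂ ∪ U₃ := Or.inl (Or.inl h)
    rw [hU] at this; exact this rfl
  have hp2 : p ∉ U₂ := fun h => by
    have : p ∈ U₁ ∪ U₂ ∪ U₃ := Or.inl (Or.inr h)
    rw [hU] at this; exact this rfl
  have hp3 : p ∉ U₃ := fun h => by
    have : p ∈ U₁ ∪ U₂ ∪ U₃ := Or.inr h
    rw [hU] at this; exact this rfl
  -- closure U₁ ⊆ U₁ ∪ {p}
  have hclU : closure U₁ ⊆ U₁ ∪ {p} := by
    intro x hx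
    by_cases hxp : x = p
    · exact Or.inr hxp
    · have hx3 : x ∈ U₁ ∪ U₂ ∪ U₃ := by rw [hU]; exact hxp
      rcases hx3 with (h | h) | h
      · exact Or.inl h
      · rcases mem_closure_iff.1 hx U₂ ho2 h with ⟨y, hy2, hy1⟩
        exact absurd (h12 (Set.singleton_subset_iff.2 hy1)
          (Set.singleton_subset_iff.2 hy2) rfl) (Set.notMem_empty y)
      · rcases mem_closure_iff.1 hx U₃ ho3 h with ⟨y, hy3, hy1⟩
        exact absurd (h13 (Set.singleton_subset_iff.2 hy1)
          (Set.singleton_subset_iff.2 hy3) rfl) (Set.notMem_empty y)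
  -- for A ∈ NC*, A ⊆ closure U₁ implies A ⊆ U₁
  have key : ∀ A : NCstar X, (A.1 : Set X) ⊆ closure U₁ → (A.1 : Set X) ⊆ U₁ := by
    intro A hA
    have hA' : (A.1 : Set X) ⊆ U₁ ∪ {p} := hA.trans hclU
    by_cases hpA : p ∈ (A.1 : Set X)
    · -- contradiction: Aᶜ preconnected but split by U₂ and U₁ ∪ U₃
      exfalso
      have hcsub : (A.1 : Set X)ᶜ ⊆ U₂ ∪ (U₁ ∪ U₃) := by
        intro x hx
        have hxp : x ≠ p := fun h => hx (h ▸ hpA)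
        have : x ∈ U₁ ∪ U₂ ∪ U₃ := by rw [hU]; exact hxp
        rcases this with (h | h) | h
        · exact Or.inr (Or.inl h)
        · exact Or.inl h
        · exact Or.inr (Or.inr h)
      have hU2c : U₂ ⊆ (A.1 : Set X)ᶜ := by
        intro x hx hxA
        rcases hA' hxA with h | h
        · exact absurd (h12 (Set.singleton_subset_iff.2 h)
            (Set.singleton_subset_iff.2 hx) rfl) (Set.notMem_empty x)
        · exact hp2 (h ▸ hx)
      have hU3c : U₃ ⊆ (A.1 : Set X)ᶜ := by
        intro x hx hxA
        rcases hA' hxA with h | h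
        · exact absurd (h13 (Set.singleton_subset_iff.2 h)
            (Set.singleton_subset_iff.2 hx) rfl) (Set.notMem_empty x)
        · exact hp3 (h ▸ hx)
      obtain ⟨x2, hx2⟩ := h2
      obtain ⟨x3, hx3⟩ := h3
      obtain ⟨z, hz⟩ := A.2.2 U₂ (U₁ ∪ U₃) ho2 (ho1.union ho3) hcsub
        ⟨x2, hU2c hx2, hx2⟩ ⟨x3, hU3c hx3, Or.inr hx3⟩
      rcases hz.2.2 with h | h
      · exact absurd (h12 (Set.singleton_subset_iff.2 h)
          (Set.singleton_subset_iff.2 hz.2.1) rfl) (Set.notMem_empty z)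
      · exact absurd (h23 (Set.singleton_subset_iff.2 hz.2.1)
          (Set.singleton_subset_iff.2 h) rfl) (Set.notMem_empty z)
    · intro x hx
      rcases hA' hx with h | h
      · exact h
      · exact absurd (h ▸ hx) hpA
  constructor
  · exact (isOpen_subsets_of_isOpen ho1).preimage continuous_subtype_val
  · have heq : {A : NCstar X | (A.1 : Set X) ⊆ U₁}
        = {A : NCstar X | (A.1 : Set X) ⊆ closure U₁} := by
      ext A
      exact ⟨fun h => h.trans subset_closure, key A⟩
    rw [heq]
    exact (isClosed_subsets_of_isClosed isClosed_closure).preimage continuous_subtype_val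
end
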